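/- arXiv:math/0701353 — 8 statements merged into one kernel-verified Lean document; each statement's English description precedes it below -/
import Mathlib

section
/- Let n ≥ 1 and let A and B be symmetric (n+1)×(n+1) complex matrices with p(t) = det(A + tB) not identically zero, and let t₀ ∈ ℂ be such that Q = A + t₀B is singular. Then the order of vanishing of p at t₀ is at least 2 if and only if either rank(Q) < n, or rank(Q) = n and the vector v spanning ker(Q) satisfies vᵀBv = 0 (i.e. the unique singular point [v] of Q is a base point of the pencil, lying on every member αA + βB). -/
open Matrix Polynomial

/-!
Write `Q = A + t₀ B`. Jacobi's formula gives `p'(t₀) = tr (adj Q · B)`, so, `t₀` being a root,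
it has multiplicity at least two exactly when `tr (adj Q · B) = 0`. The adjugate of a square
matrix vanishes iff its corank is at least two. If the corank is one, with `ker Q = ⟨v⟩`, then
`Q · adj Q = 0` puts every column of `adj Q` in `⟨v⟩`, and symmetry forces `adj Q = c · v vᵀ`
with `c ≠ 0`, whence `tr (adj Q · B) = c · vᵀ B v`.
-/

namespace Matrix

section CommRing

variable {n R : Type*} [Fintype n] [CommRing R]

theorem trace_adjugate_mul [DecidableEq n] (Q B : Matrix n n R) :
    trace (adjugate Q * B) = ∑ i, (Q.updateCol i (Bᵀ i)).det := by
  refine Finset.sum_congr rfl fun i _ => ?_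
  rw [diag_apply, ← cramer_apply, cramer_eq_adjugate_mulVec]
  rfl

theorem eval_det_map_C_add_X_smul [DecidableEq n] (A B : Matrix n n R) (t : R) :
    (A.map C + (X : R[X]) • B.map C).det.eval t = (A + t • B).det := by
  rw [← coe_evalRingHom, RingHom.map_det]
  congr 1
  ext i j
  simp [mul_comm _ t]

theorem eval_derivative_det_map_C_add_X_smul [DecidableEq n] (A B : Matrix n n R) (t : R) :
    (derivative (A.map C + (X : R[X]) • B.map C).det).eval t =
      trace (adjugate (A + t • B) * B) := by
  rw [trace_adjugate_mul]
  simp only [det_apply, derivative_sum, eval_finsetSum, derivative_smul, eval_smul,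
    derivative_prod_finset, eval_prod, eval_mul]
  rw [Finset.sum_comm]
  refine Finset.sum_congr rfl fun σ _ => ?_
  rw [← Finset.smul_sum]
  congr 1
  refine Finset.sum_congr rfl fun i _ => ?_
  rw [← Finset.prod_erase_mul _ _ (Finset.mem_univ i)]
  congr 1
  · refine Finset.prod_congr rfl fun j hj => ?_
    rw [updateCol_ne (Finset.ne_of_mem_erase hj)]
    simp [mul_comm _ t]
  · simp

theorem trace_vecMulVec_mul (v w : n → R) (B : Matrix n n R) :
    trace (vecMulVec v w * B) = w ⬝ᵥ B *ᵥ v := by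
  rw [vecMulVec_mul, trace_vecMulVec, dotProduct_comm, dotProduct_mulVec]

end CommRing

section Field

variable {m n K : Type*} [Fintype n] [Field K]

theorem rank_add_finrank_ker_mulVecLin [Fintype m] (A : Matrix m n K) :
    A.rank + Module.finrank K (LinearMap.ker A.mulVecLin) = Fintype.card n := by
  rw [rank, LinearMap.finrank_range_add_finrank_ker, Module.finrank_fintype_fun_eq_card]

theorem exists_mulVec_eq_zero_iff_of_finrank_ker_eq_one {A : Matrix m n K}
    (h : Module.finrank K (LinearMap.ker A.mulVecLin) = 1) :
    ∃ v ≠ 0, ∀ x, A *ᵥ x = 0 ↔ ∃ a : K, a • v = x := by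
  obtain ⟨⟨v, hv⟩, hv0, hspan⟩ := finrank_eq_one_iff'.mp h
  refine ⟨v, fun h0 => hv0 (Subtype.ext h0), fun x => ⟨fun hx => ?_, ?_⟩⟩
  · obtain ⟨a, ha⟩ := hspan ⟨x, hx⟩
    exact ⟨a, congrArg Subtype.val ha⟩
  · rintro ⟨a, rfl⟩
    rw [mulVec_smul, show A *ᵥ v = 0 from hv, smul_zero]

theorem adjugate_fromBlocks_one_zero_eq_zero_iff {r k : ℕ} [Nonempty (Fin r ⊕ Fin k)] :
    adjugate (fromBlocks 1 0 0 0 : Matrix (Fin r ⊕ Fin k) (Fin r ⊕ Fin k) K) = 0 ↔ 2 ≤ k := by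
  have hdiag : (fromBlocks 1 0 0 0 : Matrix (Fin r ⊕ Fin k) (Fin r ⊕ Fin k) K) =
      diagonal (Sum.elim 1 0) := by
    rw [← fromBlocks_diagonal]
    simp
  have hprod (i : Fin r ⊕ Fin k) :
      ∏ j ∈ Finset.univ.erase i, Sum.elim (1 : Fin r → K) 0 j = 0 ↔ ∃ a, Sum.inr a ≠ i := by
    simp [Finset.prod_eq_zero_iff]
  rw [hdiag, adjugate_diagonal, diagonal_eq_zero, funext_iff]
  simp only [Pi.zero_apply, hprod]
  constructor
  · intro h
    obtain ⟨a, -⟩ := h (Classical.arbitrary _)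
    obtain ⟨b, hb⟩ := h (Sum.inr a)
    have := Fintype.one_lt_card_iff.mpr ⟨a, b, fun hab => hb (hab ▸ rfl)⟩
    simp only [Fintype.card_fin] at this
    omega
  · intro hk i
    obtain ⟨a, b, hab⟩ := Fintype.one_lt_card_iff.mp (show 1 < Fintype.card (Fin k) by simpa)
    by_cases ha : Sum.inr a = i
    · exact ⟨b, fun hb => hab (Sum.inr_injective (ha.trans hb.symm))⟩
    · exact ⟨a, ha⟩

theorem adjugate_eq_zero_iff_rank_add_two_le [DecidableEq n] [Nonempty n] (A : Matrix n n K) :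
    adjugate A = 0 ↔ A.rank + 2 ≤ Fintype.card n := by
  obtain ⟨V, U, e, hV, hU, hVAU⟩ := exists_rank_normal_form A
  have isUnit_adjugate {M : Matrix n n K} (hM : IsUnit M) : IsUnit (adjugate M) := by
    rw [isUnit_iff_isUnit_det, det_adjugate] at *
    exact hM.pow _
  have : Nonempty (Fin A.rank ⊕ Fin (Fintype.card n - A.rank)) := e.symm.nonempty
  calc adjugate A = 0 ↔ adjugate (V * A * U) = 0 := by
        rw [adjugate_mul_distrib, adjugate_mul_distrib, (isUnit_adjugate hU).mul_right_eq_zero,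
          (isUnit_adjugate hV).mul_left_eq_zero]
    _ ↔ adjugate (fromBlocks 1 0 0 0 : Matrix (Fin A.rank ⊕ Fin (Fintype.card n - A.rank))
          (Fin A.rank ⊕ Fin (Fintype.card n - A.rank)) K) = 0 := by
        rw [hVAU, adjugate_submatrix_equiv_self]
        exact (reindexLinearEquiv K K e.symm e.symm).map_eq_zero_iff (x := adjugate _)
    _ ↔ A.rank + 2 ≤ Fintype.card n := by
        rw [adjugate_fromBlocks_one_zero_eq_zero_iff]
        omega

theorem exists_adjugate_eq_smul_vecMulVec [DecidableEq n] {Q : Matrix n n K} (hQ : Q.IsSymm)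
    (hdet : Q.det = 0) {v : n → K} (hv : v ≠ 0) (hker : ∀ x, Q *ᵥ x = 0 → ∃ a : K, a • v = x) :
    ∃ c : K, adjugate Q = c • vecMulVec v v := by
  have hcol (j : n) : ∃ a : K, a • v = fun i => adjugate Q i j := by
    refine hker _ (funext fun i => ?_)
    simpa [hdet, mul_apply, mulVec, dotProduct] using congrFun (congrFun (mul_adjugate Q) i) j
  choose w hw using hcol
  have hadj (i j : n) : adjugate Q i j = w j * v i := (congrFun (hw j) i).symm
  obtain ⟨i₀, hi₀⟩ : ∃ i, v i ≠ 0 := Function.ne_iff.mp hv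
  refine ⟨w i₀ / v i₀, ext fun i j => ?_⟩
  have hsymm : w j * v i₀ = w i₀ * v j := by
    rw [← hadj, ← hadj, hQ.adjugate.apply]
  rw [hadj, smul_apply, vecMulVec_apply, smul_eq_mul]
  field_simp
  linear_combination v i * hsymm

end Field

end Matrix

theorem multiplicity_ge_two_iff_general (n : ℕ)
    (A B : Matrix (Fin (n + 1)) (Fin (n + 1)) ℂ)
    (hA : A.IsSymm) (hB : B.IsSymm)
    (p : Polynomial ℂ)
    (hp : p = (A.map Polynomial.C + (Polynomial.X : Polynomial ℂ) • B.map Polynomial.C).det)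
    (hpne : p ≠ 0) (t₀ : ℂ)
    (hsing : (A + t₀ • B).det = 0) :
    2 ≤ p.rootMultiplicity t₀ ↔
      ((A + t₀ • B).rank < n ∨
        ((A + t₀ • B).rank = n ∧
          ∀ v : Fin (n + 1) → ℂ, (A + t₀ • B).mulVec v = 0 → v ⬝ᵥ B.mulVec v = 0)) := by
  set Q := A + t₀ • B
  have hmult : 2 ≤ p.rootMultiplicity t₀ ↔ trace (adjugate Q * B) = 0 := by
    rw [Nat.succ_le_iff, one_lt_rootMultiplicity_iff_isRoot hpne, IsRoot, IsRoot, hp,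
      eval_det_map_C_add_X_smul, eval_derivative_det_map_C_add_X_smul]
    exact and_iff_right hsing
  have hnullity := rank_add_finrank_ker_mulVecLin Q
  have hker_pos : Module.finrank ℂ (LinearMap.ker Q.mulVecLin) ≠ 0 := by
    obtain ⟨v, hv, hQv⟩ := exists_mulVec_eq_zero_iff.mpr hsing
    exact Submodule.finrank_eq_zero.not.mpr ((Submodule.ne_bot_iff _).mpr ⟨v, hQv, hv⟩)
  have hadj := adjugate_eq_zero_iff_rank_add_two_le Q
  rw [Fintype.card_fin] at hnullity hadj
  rw [hmult]
  rcases (show Q.rank < n ∨ Q.rank = n by omega) with hlt | hrank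
  · simp [hadj.mpr (by omega), hlt]
  obtain ⟨v, hv, hspan⟩ := exists_mulVec_eq_zero_iff_of_finrank_ker_eq_one
    (by omega : Module.finrank ℂ (LinearMap.ker Q.mulVecLin) = 1)
  obtain ⟨c, hc⟩ := exists_adjugate_eq_smul_vecMulVec (hA.add (hB.smul t₀)) hsing hv
    fun x => (hspan x).mp
  have hc0 : c ≠ 0 := by
    rintro rfl
    exact absurd (hadj.mp (by rw [hc, zero_smul])) (by omega)
  rw [hc, smul_mul, trace_smul, trace_vecMulVec_mul, smul_eq_mul, mul_eq_zero, or_iff_right hc0]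
  simp only [hrank, lt_irrefl, false_or, true_and]
  refine ⟨fun hvBv x hx => ?_, fun h => h v ((hspan v).mpr ⟨1, one_smul _ _⟩)⟩
  obtain ⟨a, rfl⟩ := (hspan x).mp hx
  simp [mulVec_smul, hvBv]

/-- Let `n ≥ 1`, `A`, `B` symmetric `(n+1)×(n+1)` complex matrices with
`p(t) = det(A + tB)` not identically zero, and `t₀ ∈ ℂ` with `Q = A + t₀B` singular.
Then `p` vanishes to order at least `2` at `t₀` iff either `rank Q < n`, or `rank Q = n`
and every vector `v` in the kernel of `Q` satisfies `vᵀBv = 0` (i.e. the unique singular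
point of `Q` is a base point of the pencil). -/
theorem multiplicity_ge_two_iff (n : ℕ) (hn : 1 ≤ n)
    (A B : Matrix (Fin (n + 1)) (Fin (n + 1)) ℂ)
    (hA : A.IsSymm) (hB : B.IsSymm)
    (p : Polynomial ℂ)
    (hp : p = (A.map Polynomial.C + (Polynomial.X : Polynomial ℂ) • B.map Polynomial.C).det)
    (hpne : p ≠ 0) (t₀ : ℂ)
    (hsing : (A + t₀ • B).det = 0) :
    2 ≤ p.rootMultiplicity t₀ ↔
      ((A + t₀ • B).rank < n ∨
        ((A + t₀ • B).rank = n ∧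
          ∀ v : Fin (n + 1) → ℂ, (A + t₀ • B).mulVec v = 0 → v ⬝ᵥ B.mulVec v = 0)) :=
  multiplicity_ge_two_iff_general n A B hA hB p hp hpne t₀ hsing
end

section
/- Let n ≥ 1 and let A and B be symmetric (n+1)×(n+1) complex matrices with p(t) = det(A + tB) not identically zero. Let t₀ ∈ ℂ be such that Q = A + t₀B has rank exactly n, let v span ker(Q), and assume vᵀBv = 0 (so the singular point of Q is a base point of the pencil and the multiplicity of t₀ is at least 2). Since vᵀBv = 0, the vector Bv lies in the image of Q; then the order of vanishing of p at t₀ is exactly 2 if and only if for one (equivalently, for every) w with Qw = Bv one has vᵀBw ≠ 0. (Geometrically: exactly 2 if and only if every other member of the pencil is smooth at the singular point [v] of Q and its tangent hyperplane there is not tangent to Q along a line.) -/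
open Matrix Polynomial Module

lemma mulVec_map_C {N : ℕ} (Q : Matrix (Fin N) (Fin N) ℂ) (x : Fin N → ℂ) :
    (Q.map (Polynomial.C : ℂ → ℂ[X])).mulVec (fun i => Polynomial.C (x i)) =
      fun i => Polynomial.C (Q.mulVec x i) := by
  funext i
  simp [Matrix.mulVec, dotProduct, Matrix.map_apply, map_sum]

lemma adj_struct {N : ℕ} (Q : Matrix (Fin N) (Fin N) ℂ) (hsymm : Q.IsSymm)
    (v : Fin N → ℂ) (hv : v ≠ 0) (hQv : Q.mulVec v = 0)
    (hker : ∀ x, Q.mulVec x = 0 → ∃ c : ℂ, x = c • v) :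
    ∃ c : ℂ, c ≠ 0 ∧ ∀ i j, Q.adjugate i j = c * v i * v j := by
  obtain ⟨e, he⟩ : ∃ e, v e ≠ 0 := Function.ne_iff.mp hv
  have hdet : Q.det = 0 := Matrix.exists_mulVec_eq_zero_iff.mp ⟨v, hv, hQv⟩
  have hdotQ : ∀ x, v ⬝ᵥ Q.mulVec x = 0 := by
    intro x
    rw [Matrix.dotProduct_mulVec, ← hsymm, Matrix.vecMul_transpose, hQv,
      zero_dotProduct]
  have hmul : Q * Q.adjugate = 0 := by
    rw [Matrix.mul_adjugate, hdet, zero_smul]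
  have hcol : ∀ j, ∃ cj : ℂ, (fun i => Q.adjugate i j) = cj • v := by
    intro j
    apply hker
    funext i
    have := congrFun (congrFun hmul i) j
    simpa [Matrix.mul_apply, Matrix.mulVec, dotProduct] using this
  choose lam hlam using hcol
  have hentry : ∀ i j, Q.adjugate i j = lam j * v i := by
    intro i j
    have := congrFun (hlam j) i
    simpa using this
  have hsymadj : ∀ i j, Q.adjugate i j = Q.adjugate j i := by
    intro i j
    have h1 : (Q.adjugate)ᵀ = Q.adjugate := by
      rw [Matrix.adjugate_transpose, hsymm]
    simpa using (congrFun (congrFun h1 j) i)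
  -- adjugate e e ≠ 0
  have hee : Q.adjugate e e ≠ 0 := by
    set R := Q.updateCol e ((fun i => Q i e) + Pi.single e 1) with hR
    have hRdet : R.det = Q.adjugate e e := by
      rw [hR, Matrix.det_updateCol_add, Matrix.updateCol_eq_self, hdet, zero_add]
      have h2 : Q.adjugate e e = (Qᵀ.updateRow e (Pi.single e 1)).det := by
        conv_lhs => rw [← hsymm]
        rw [Matrix.adjugate_apply]
      rw [h2, Matrix.updateRow_transpose, Matrix.det_transpose]
    have hRne : R.det ≠ 0 := by
      intro h0
      obtain ⟨x, hx, hRx⟩ := Matrix.exists_mulVec_eq_zero_iff.mpr h0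
      have hRx' : Q.mulVec x + x e • (Pi.single e 1 : Fin N → ℂ) = 0 := by
        rw [← hRx]
        funext i
        have hterm : ∀ k, R i k * x k
            = Q i k * x k + (if k = e then (Pi.single e 1 : Fin N → ℂ) i * x k else 0) := by
          intro k
          simp only [hR, Matrix.updateCol_apply, Pi.add_apply]
          split_ifs with hk
          · subst hk; ring
          · ring
        have hsum : (R.mulVec x) i
            = (Q.mulVec x) i + (Pi.single e 1 : Fin N → ℂ) i * x e := by
          simp only [Matrix.mulVec, dotProduct]
          rw [Finset.sum_congr rfl (fun k _ => hterm k), Finset.sum_add_distrib,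
            Finset.sum_ite_eq' Finset.univ e (fun k => (Pi.single e 1 : Fin N → ℂ) i * x k)]
          simp
        rw [hsum]
        simp [mul_comm]
      have hxe : x e = 0 := by
        have h3 := congrArg (fun y => v ⬝ᵥ y) hRx'
        simp only [dotProduct_add, dotProduct_smul, dotProduct_single,
          dotProduct_zero, hdotQ, smul_eq_mul, mul_one, zero_add] at h3
        rcases mul_eq_zero.mp h3 with h | h
        · exact h
        · exact absurd h he
      have hQx : Q.mulVec x = 0 := by
        rw [hxe, zero_smul, add_zero] at hRx'
        exact hRx'
      obtain ⟨c, hc⟩ := hker x hQx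
      have : c * v e = 0 := by
        have := congrFun hc e
        simp only [Pi.smul_apply, smul_eq_mul] at this
        rw [← this, hxe]
      rcases mul_eq_zero.mp this with h | h
      · exact hx (by rw [hc, h, zero_smul])
      · exact he h
    rw [← hRdet]; exact hRne
  have hlame : lam e ≠ 0 := by
    intro h
    apply hee
    rw [hentry e e, h, zero_mul]
  refine ⟨lam e / v e, div_ne_zero hlame he, ?_⟩
  intro i j
  have hsym2 : lam j * v e = lam e * v j := by
    rw [← hentry e j, hsymadj, hentry]
  rw [hentry]
  field_simp
  linear_combination v i * hsym2

/-- Let `n ≥ 1`, `A`, `B` symmetric `(n+1)×(n+1)` complex matrices with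
`p(t) = det(A + tB)` not identically zero.  Let `t₀ ∈ ℂ` with `Q = A + t₀B` of rank
exactly `n`, let `v ≠ 0` span `ker Q`, and assume `vᵀBv = 0`.  Then `Bv` lies in the
image of `Q`, and the order of vanishing of `p` at `t₀` is exactly `2` iff for every `w`
with `Qw = Bv` one has `vᵀBw ≠ 0`. -/
theorem multiplicity_eq_two_iff (n : ℕ) (hn : 1 ≤ n)
    (A B : Matrix (Fin (n + 1)) (Fin (n + 1)) ℂ)
    (hA : A.IsSymm) (hB : B.IsSymm)
    (p : Polynomial ℂ)
    (hp : p = (A.map Polynomial.C + (Polynomial.X : Polynomial ℂ) • B.map Polynomial.C).det)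
    (hpne : p ≠ 0) (t₀ : ℂ)
    (hrank : (A + t₀ • B).rank = n)
    (v : Fin (n + 1) → ℂ) (hv : v ≠ 0)
    (hker : (A + t₀ • B).mulVec v = 0)
    (hbase : v ⬝ᵥ B.mulVec v = 0) :
    (∃ w : Fin (n + 1) → ℂ, (A + t₀ • B).mulVec w = B.mulVec v) ∧
      (p.rootMultiplicity t₀ = 2 ↔
        ∀ w : Fin (n + 1) → ℂ, (A + t₀ • B).mulVec w = B.mulVec v → v ⬝ᵥ B.mulVec w ≠ 0) := by
  set Q := A + t₀ • B with hQdef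
  obtain ⟨e, he⟩ : ∃ e, v e ≠ 0 := Function.ne_iff.mp hv
  have hQsymm : Q.IsSymm := by
    rw [Matrix.IsSymm, hQdef, Matrix.transpose_add, Matrix.transpose_smul, hA, hB]
  -- kernel is spanned by v
  have hrank' : finrank ℂ (LinearMap.range Q.mulVecLin) = n := hrank
  have hfinker : finrank ℂ (LinearMap.ker Q.mulVecLin) = 1 := by
    have h1 := LinearMap.finrank_range_add_finrank_ker Q.mulVecLin
    rw [Module.finrank_fin_fun, hrank'] at h1
    omega
  have hvmem : v ∈ LinearMap.ker Q.mulVecLin := by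
    rw [LinearMap.mem_ker, Matrix.mulVecLin_apply, hker]
  have hspan : Submodule.span ℂ {v} = LinearMap.ker Q.mulVecLin := by
    apply Submodule.eq_of_le_of_finrank_eq
    · rw [Submodule.span_le, Set.singleton_subset_iff]
      exact hvmem
    · rw [finrank_span_singleton hv, hfinker]
  have hkerfun : ∀ x, Q.mulVec x = 0 → ∃ c : ℂ, x = c • v := by
    intro x hx
    have hxmem : x ∈ Submodule.span ℂ ({v} : Set (Fin (n+1) → ℂ)) := by
      rw [hspan, LinearMap.mem_ker, Matrix.mulVecLin_apply, hx]
    obtain ⟨c, hc⟩ := Submodule.mem_span_singleton.mp hxmem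
    exact ⟨c, hc.symm⟩
  -- dot product with v kills the range
  have hdotQ : ∀ x, v ⬝ᵥ Q.mulVec x = 0 := by
    intro x
    rw [Matrix.dotProduct_mulVec, ← hQsymm, Matrix.vecMul_transpose, hker,
      zero_dotProduct]
  -- the range is the orthogonal complement of v
  let f : (Fin (n+1) → ℂ) →ₗ[ℂ] ℂ :=
    { toFun := fun x => v ⬝ᵥ x
      map_add' := fun x y => dotProduct_add v x y
      map_smul' := fun c x => by simp [dotProduct_smul] }
  have hfapp : ∀ x, f x = v ⬝ᵥ x := fun _ => rfl
  have hrange_le : LinearMap.range Q.mulVecLin ≤ LinearMap.ker f := by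
    rintro y ⟨x, rfl⟩
    rw [LinearMap.mem_ker, hfapp, Matrix.mulVecLin_apply]
    exact hdotQ x
  have hfsurj : LinearMap.range f = ⊤ := by
    rw [LinearMap.range_eq_top]
    intro cc
    refine ⟨(cc / v e) • (Pi.single e 1 : Fin (n+1) → ℂ), ?_⟩
    rw [LinearMap.map_smul, hfapp, dotProduct_single, mul_one, smul_eq_mul]
    field_simp
  have hfker : finrank ℂ (LinearMap.ker f) = n := by
    have h1 := LinearMap.finrank_range_add_finrank_ker f
    rw [Module.finrank_fin_fun, hfsurj, finrank_top, finrank_self] at h1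
    omega
  have hrange : LinearMap.range Q.mulVecLin = LinearMap.ker f :=
    Submodule.eq_of_le_of_finrank_eq hrange_le (by rw [hrank', hfker])
  have hexists : ∃ w : Fin (n + 1) → ℂ, Q.mulVec w = B.mulVec v := by
    have hmem : B.mulVec v ∈ LinearMap.ker f := by
      rw [LinearMap.mem_ker, hfapp]
      exact hbase
    rw [← hrange] at hmem
    obtain ⟨w, hw⟩ := hmem
    exact ⟨w, by rw [← Matrix.mulVecLin_apply]; exact hw⟩
  refine ⟨hexists, ?_⟩
  obtain ⟨w, hw⟩ := hexists
  -- invariance of v ⬝ᵥ B w over solutions w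
  have hinv : ∀ w', Q.mulVec w' = B.mulVec v → v ⬝ᵥ B.mulVec w' = v ⬝ᵥ B.mulVec w := by
    intro w' hw'
    have h0 : Q.mulVec (w' - w) = 0 := by
      rw [Matrix.mulVec_sub, hw, hw', sub_self]
    obtain ⟨d, hd⟩ := hkerfun _ h0
    have hw'' : w' = d • v + w := eq_add_of_sub_eq hd
    rw [hw'', Matrix.mulVec_add, dotProduct_add, Matrix.mulVec_smul,
      dotProduct_smul, hbase, smul_zero, zero_add]
  -- adjugate structure
  obtain ⟨c, hc0, hcadj⟩ := adj_struct Q hQsymm v hv hker hkerfun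
  -- polynomial identity
  set M : Matrix (Fin (n+1)) (Fin (n+1)) ℂ[X] := A.map C + (X : ℂ[X]) • B.map C with hMdef
  set s : ℂ[X] := X - C t₀ with hs
  have hsne : s ≠ 0 := X_sub_C_ne_zero t₀
  have hM : M = Q.map C + s • B.map C := by
    refine Matrix.ext fun i j => ?_
    simp only [hMdef, hQdef, hs, Matrix.map_apply, Matrix.add_apply, Matrix.smul_apply,
      smul_eq_mul, _root_.map_add, _root_.map_mul]
    ring
  have hvec : M.mulVec (s • (fun i => C (w i)) - (fun i => C (v i)))
      = (s^2) • (fun i => C (B.mulVec w i)) := by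
    rw [hM, Matrix.add_mulVec, Matrix.smul_mulVec, Matrix.mulVec_sub,
      Matrix.mulVec_sub, Matrix.mulVec_smul, Matrix.mulVec_smul,
      mulVec_map_C, mulVec_map_C, mulVec_map_C, mulVec_map_C, hker, hw]
    have hz : (fun i => Polynomial.C ((0 : Fin (n+1) → ℂ) i)) = (0 : Fin (n+1) → ℂ[X]) := by
      funext i; simp
    rw [hz, smul_sub, smul_smul, ← pow_two, sub_zero]
    abel
  have hadjid : p • (s • (fun i => C (w i)) - fun i => C (v i))
      = s^2 • ((M.adjugate).mulVec (fun i => C (B.mulVec w i))) := by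
    have h1 : (M.adjugate).mulVec (M.mulVec (s • (fun i => C (w i)) - fun i => C (v i)))
        = p • (s • (fun i => C (w i)) - fun i => C (v i)) := by
      rw [Matrix.mulVec_mulVec, Matrix.adjugate_mul, ← hp,
        Matrix.smul_mulVec, Matrix.one_mulVec]
    rw [← h1, hvec, Matrix.mulVec_smul]
  set r : ℂ[X] := ((M.adjugate).mulVec (fun i => C (B.mulVec w i))) e with hr
  have hkey : p * (s * C (w e) - C (v e)) = s^2 * r := by
    have h2 := congrFun hadjid e
    simpa [Pi.smul_apply, smul_eq_mul, Pi.sub_apply] using h2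
  -- evaluation of r at t₀
  have hmapM : M.map (eval t₀) = Q := by
    refine Matrix.ext fun i j => ?_
    simp only [hMdef, hQdef, Matrix.map_apply, Matrix.add_apply, Matrix.smul_apply,
      smul_eq_mul, eval_add, eval_mul, eval_X, eval_C]
  have hreval : r.eval t₀ = c * v e * (v ⬝ᵥ B.mulVec w) := by
    have hadjmap : (M.adjugate).map (eval t₀) = Q.adjugate := by
      have h3 := (Polynomial.evalRingHom t₀).map_adjugate M
      simp only [RingHom.mapMatrix_apply] at h3
      rw [show (⇑(evalRingHom t₀)) = eval t₀ from rfl] at h3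
      rw [h3, hmapM]
    have h4 : r.eval t₀ = ∑ j, Q.adjugate e j * (B.mulVec w) j := by
      rw [hr]
      simp only [Matrix.mulVec, dotProduct, eval_finset_sum, eval_mul, eval_C]
      refine Finset.sum_congr rfl fun j _ => ?_
      rw [← hadjmap]
      simp [Matrix.map_apply]
    rw [h4]
    have h5 : ∀ j, Q.adjugate e j * (B.mulVec w) j = c * v e * (v j * (B.mulVec w) j) := by
      intro j; rw [hcadj e j]; ring
    rw [Finset.sum_congr rfl fun j _ => h5 j, ← Finset.mul_sum]
    rfl
  -- root multiplicity bookkeeping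
  have hgeval : (s * C (w e) - C (v e)).eval t₀ = -(v e) := by
    rw [hs]; simp
  have hg0 : ¬ (s * C (w e) - C (v e)).IsRoot t₀ := by
    rw [Polynomial.IsRoot, hgeval]
    simpa using he
  have hgne : s * C (w e) - C (v e) ≠ 0 := fun h => hg0 (by rw [h]; simp)
  have hrne : r ≠ 0 := by
    intro h
    rw [h, mul_zero] at hkey
    exact (mul_ne_zero hpne hgne) hkey
  have hcount : p.rootMultiplicity t₀ = 2 + r.rootMultiplicity t₀ := by
    have h1 := Polynomial.rootMultiplicity_mul (x := t₀) (mul_ne_zero hpne hgne)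
    have h2 : rootMultiplicity t₀ (s^2 * r) = 2 + rootMultiplicity t₀ r := by
      rw [pow_two, mul_assoc,
        Polynomial.rootMultiplicity_mul (mul_ne_zero hsne (mul_ne_zero hsne hrne)),
        Polynomial.rootMultiplicity_mul (mul_ne_zero hsne hrne), hs,
        Polynomial.rootMultiplicity_X_sub_C_self]
      ring
    rw [hkey, h2] at h1
    rw [Polynomial.rootMultiplicity_eq_zero hg0] at h1
    omega
  constructor
  · intro h2 w' hw'
    rw [hinv w' hw']
    have hr0 : r.rootMultiplicity t₀ = 0 := by omega
    have hev : r.eval t₀ ≠ 0 := by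
      intro h
      rcases Polynomial.rootMultiplicity_eq_zero_iff.mp hr0 h with h3
      exact hrne h3
    rw [hreval] at hev
    intro h
    rw [h, mul_zero] at hev
    exact hev rfl
  · intro hforall
    have hdot := hforall w hw
    have hr0 : r.rootMultiplicity t₀ = 0 := by
      apply Polynomial.rootMultiplicity_eq_zero
      rw [Polynomial.IsRoot, hreval]
      exact mul_ne_zero (mul_ne_zero hc0 he) hdot
    omega
end

section
/- Let n ≥ 2 and let A and B be symmetric (n+1)×(n+1) complex matrices whose pencil has generic corank r ≥ 1 (so every member is singular) and non-constant vertices. Let W ⊆ ℂ^{n+1} be the linear span of the union of the kernels ker(A+tB) over all t ∈ ℂ with corank(A+tB) = r. Then r + 1 ≤ dim W and 2·dim W ≤ n + r + 1; equivalently, the projective subspace Π spanned by the vertices of the generic members has dimension m with r ≤ m ≤ (n+r−1)/2. -/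
/-!
For a symmetric pencil, kernels of members of maximal rank are `B`-orthogonal to each other.
For `s ≠ t` this follows by subtracting `xᵀ(A + sB)y = 0` from `xᵀ(A + tB)y = 0`. For `s = t`,
Cramer's rule on an invertible maximal minor of `A + tB` extends a kernel vector `y` to a
continuous family of kernel vectors of `A + uB` for `u` near `t`, and the case `s ≠ t` passes to
the limit `u → t`. Hence `W` is totally isotropic for every member `A + tB`, which gives
`2 dim W ≤ (n + 1) + dim ker (A + tB) = n + 1 + r`; and `W` contains two distinct
`r`-dimensional kernels, so `dim W ≥ r + 1`.
-/

open Matrix Module Filter Topology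
open LinearMap (BilinForm)

theorem Submodule.finrank_lt_finrank_sup_of_ne {K V : Type*} [DivisionRing K] [AddCommGroup V]
    [Module K V] [FiniteDimensional K V] {U U' : Submodule K V}
    (h : finrank K U = finrank K U') (hne : U ≠ U') : finrank K U < finrank K ↥(U ⊔ U') := by
  refine finrank_lt_finrank_of_lt (lt_of_le_of_ne (le_sup_left : U ≤ U ⊔ U') fun hsup => hne ?_)
  exact (eq_of_le_of_finrank_le (le_sup_right.trans_eq hsup.symm) h.le).symm

namespace LinearMap.BilinForm

variable {K V : Type*} [Field K] [AddCommGroup V] [Module K V]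

theorem biSup_le_orthogonal_biSup {ι : Type*} (b : BilinForm K V) {s : Set ι}
    {U : ι → Submodule K V} (h : ∀ i ∈ s, ∀ j ∈ s, ∀ x ∈ U i, ∀ y ∈ U j, b x y = 0) :
    ⨆ i ∈ s, U i ≤ b.orthogonal (⨆ i ∈ s, U i) := by
  refine iSup₂_le fun j hj y hy x hx => ?_
  have hker : ⨆ i ∈ s, U i ≤ LinearMap.ker (b.flip y) :=
    iSup₂_le fun i hi x hx => h i hi j hj x hx y hy
  exact hker hx

theorem two_mul_finrank_le_of_le_orthogonal [FiniteDimensional K V] {b : BilinForm K V}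
    {W : Submodule K V} (hW : W ≤ b.orthogonal W) :
    2 * finrank K W ≤ finrank K V + finrank K (LinearMap.ker b) := by
  have h := finrank_add_finrank_orthogonal' (B := b) W
  have h₁ := Submodule.finrank_mono hW
  have h₂ := Submodule.finrank_mono (inf_le_right : W ⊓ LinearMap.ker b ≤ _)
  omega

end LinearMap.BilinForm

namespace Matrix

variable {m n o K : Type*}

section Rank

variable [Field K] [Fintype n]

theorem exists_linearIndependent_row_comp_of_le_rank [Finite m] (M : Matrix m n K) {k : ℕ}
    (hk : k ≤ M.rank) : ∃ f : Fin k → m, LinearIndependent K (M.row ∘ f) := by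
  obtain ⟨κ, a, ha, hspan, hli⟩ := exists_linearIndependent' K M.row
  have : Finite κ := Finite.of_injective a ha
  have : Fintype κ := Fintype.ofFinite κ
  have hcard : Fintype.card (Fin k) ≤ Fintype.card κ := by
    rwa [rank_eq_finrank_span_row, ← hspan, finrank_span_eq_card hli, ← Fintype.card_fin k] at hk
  obtain ⟨e⟩ := Function.Embedding.nonempty_of_card_le hcard
  exact ⟨a ∘ e, hli.comp e e.injective⟩

theorem exists_isUnit_submatrix_of_le_rank [Fintype m] (M : Matrix m n K) {k : ℕ}
    (hk : k ≤ M.rank) : ∃ (f : Fin k → m) (g : Fin k → n), IsUnit (M.submatrix f g) := by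
  obtain ⟨f, hf⟩ := M.exists_linearIndependent_row_comp_of_le_rank hk
  have hrank : (M.submatrix f id)ᵀ.rank = k := by
    rw [rank_transpose]
    simpa using LinearIndependent.rank_matrix (M := M.submatrix f id) hf
  obtain ⟨g, hg⟩ := (M.submatrix f id)ᵀ.exists_linearIndependent_row_comp_of_le_rank hrank.ge
  exact ⟨f, g, linearIndependent_cols_iff_isUnit.mp hg⟩

/-- The rows `f` span the row space of `M`, since they already have rank `card o ≥ M.rank`. -/
theorem mulVec_eq_zero_of_submatrix_mulVec_eq_zero [Fintype o] [DecidableEq o]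
    {M : Matrix m n K} {f : o → m} {g : o → n} (hS : IsUnit (M.submatrix f g))
    (hM : M.rank ≤ Fintype.card o) {v : n → K} (hv : M.submatrix f id *ᵥ v = 0) :
    M *ᵥ v = 0 := by
  have hle : LinearMap.ker M.mulVecLin ≤ LinearMap.ker (M.submatrix f id).mulVecLin := by
    intro w hw
    ext i
    exact congrFun (LinearMap.mem_ker.mp hw) (f i)
  have hrank : Fintype.card o ≤ (M.submatrix f id).rank := by
    simpa [rank_of_isUnit _ hS] using (M.submatrix f id).rank_submatrix_le id g
  have h := LinearMap.finrank_range_add_finrank_ker M.mulVecLin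
  have h' := LinearMap.finrank_range_add_finrank_ker (M.submatrix f id).mulVecLin
  have heq := Submodule.eq_of_le_of_finrank_le hle (by unfold rank at hM hrank; omega)
  exact LinearMap.mem_ker.mp (heq ▸ hv : v ∈ LinearMap.ker M.mulVecLin)

end Rank

section MinorProjector

variable {R : Type*} [CommRing R] [Fintype n] [DecidableEq n] [Fintype o] [DecidableEq o]

/-- `det S • (1 - J * S⁻¹ * M)` written with the adjugate, where `S = M.submatrix id g` and `J` is
the inclusion of the columns `g`: it maps into `ker M` and depends polynomially on `M`. -/
def minorProjector (M : Matrix o n R) (g : o → n) : Matrix n n R :=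
  (M.submatrix id g).det • 1 - (1 : Matrix n n R).submatrix id g * (M.submatrix id g).adjugate * M

theorem mul_minorProjector (M : Matrix o n R) (g : o → n) : M * minorProjector M g = 0 := by
  have hJ : M * (1 : Matrix n n R).submatrix id g = M.submatrix id g := by
    simpa using mul_submatrix_one (Equiv.refl n) g M
  rw [minorProjector, Matrix.mul_sub, Matrix.mul_smul, Matrix.mul_one, ← Matrix.mul_assoc,
    ← Matrix.mul_assoc, hJ, mul_adjugate, Matrix.smul_mul, Matrix.one_mul, sub_self]

theorem minorProjector_mulVec_of_mulVec_eq_zero {M : Matrix o n R} (g : o → n) {v : n → R}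
    (hv : M *ᵥ v = 0) : minorProjector M g *ᵥ v = (M.submatrix id g).det • v := by
  rw [minorProjector, sub_mulVec, ← mulVec_mulVec, hv, mulVec_zero, sub_zero, smul_mulVec,
    one_mulVec]

end MinorProjector

section Pencil

variable [Fintype n]

theorem IsSymm.dotProduct_mulVec_eq_zero [CommSemiring K] {M : Matrix n n K} (hM : M.IsSymm)
    {x : n → K} (hx : M *ᵥ x = 0) (y : n → K) : x ⬝ᵥ M *ᵥ y = 0 := by
  rw [dotProduct_mulVec, ← mulVec_transpose, hM.eq, hx, zero_dotProduct]

theorem IsSymm.ker_toBilin'_le [CommRing K] [DecidableEq n] {M : Matrix n n K} (hM : M.IsSymm) :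
    LinearMap.ker M.toBilin' ≤ LinearMap.ker M.mulVecLin := by
  intro v hv
  ext j
  have hj := LinearMap.congr_fun (LinearMap.mem_ker.mp hv) (Pi.single j 1)
  rw [toBilin'_apply', dotProduct_mulVec, ← mulVec_transpose, hM.eq, dotProduct_single,
    mul_one] at hj
  simpa using hj

theorem dotProduct_pencil_mulVec [CommRing K] (A B : Matrix n n K) (x y : n → K) (s t : K) :
    x ⬝ᵥ (A + s • B) *ᵥ y = x ⬝ᵥ (A + t • B) *ᵥ y + (s - t) * x ⬝ᵥ B *ᵥ y := by
  simp only [add_mulVec, smul_mulVec, dotProduct_add, dotProduct_smul, smul_eq_mul]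
  ring

theorem pencil_ker_dotProduct_eq_zero_of_ne [Field K] {A B : Matrix n n K} (hA : A.IsSymm)
    (hB : B.IsSymm) {s t : K} (hst : s ≠ t) {x y : n → K} (hx : (A + s • B) *ᵥ x = 0)
    (hy : (A + t • B) *ᵥ y = 0) : x ⬝ᵥ B *ᵥ y = 0 := by
  have h := dotProduct_pencil_mulVec A B x y s t
  rw [(hA.add (hB.smul s)).dotProduct_mulVec_eq_zero hx, hy, dotProduct_zero, zero_add] at h
  exact (mul_eq_zero.mp h.symm).resolve_left (sub_ne_zero.mpr hst)

variable {𝕜 : Type*} [NontriviallyNormedField 𝕜] [DecidableEq n] {A B : Matrix n n 𝕜}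

theorem pencil_ker_dotProduct_eq_zero_of_rank_max (hA : A.IsSymm) (hB : B.IsSymm) {t : 𝕜}
    (hmax : ∀ u : 𝕜, (A + u • B).rank ≤ (A + t • B).rank) {x y : n → 𝕜}
    (hx : (A + t • B) *ᵥ x = 0) (hy : (A + t • B) *ᵥ y = 0) : x ⬝ᵥ B *ᵥ y = 0 := by
  obtain ⟨f, g, hS⟩ := exists_isUnit_submatrix_of_le_rank (A + t • B) le_rfl
  have hSdet := ((isUnit_iff_isUnit_det _).mp hS).ne_zero
  have hpencil : Continuous fun u : 𝕜 => A + u • B := by fun_prop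
  let φ : 𝕜 → 𝕜 := fun u => x ⬝ᵥ B *ᵥ (minorProjector ((A + u • B).submatrix f id) g *ᵥ y)
  have hφ : Continuous φ := by
    simp only [φ, minorProjector, submatrix_submatrix, Function.comp_id, Function.id_comp]
    fun_prop
  have hdet : ∀ᶠ u in 𝓝 t, ((A + u • B).submatrix f g).det ≠ 0 :=
    (hpencil.matrix_submatrix f g).matrix_det.continuousAt.eventually_ne hSdet
  have hφ_zero : ∀ᶠ u in 𝓝[≠] t, φ u = 0 := by
    filter_upwards [nhdsWithin_le_nhds hdet, self_mem_nhdsWithin] with u hu hut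
    refine pencil_ker_dotProduct_eq_zero_of_ne hA hB (Ne.symm hut) hx ?_
    refine mulVec_eq_zero_of_submatrix_mulVec_eq_zero (isUnit_iff_isUnit_det _ |>.mpr hu.isUnit)
      (by simpa using hmax u) ?_
    rw [mulVec_mulVec, mul_minorProjector, zero_mulVec]
  have hφt : φ t = 0 := tendsto_nhds_unique (hφ.continuousAt.tendsto.mono_left nhdsWithin_le_nhds)
    (tendsto_const_nhds.congr' (hφ_zero.mono fun _ h => h.symm))
  have hyf : (A + t • B).submatrix f id *ᵥ y = 0 := by
    ext i
    exact congrFun hy (f i)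
  simp only [φ, minorProjector_mulVec_of_mulVec_eq_zero g hyf, submatrix_submatrix,
    Function.comp_id, mulVec_smul, dotProduct_smul, smul_eq_mul] at hφt
  exact (mul_eq_zero.mp hφt).resolve_left hSdet

theorem pencil_ker_dotProduct_eq_zero (hA : A.IsSymm) (hB : B.IsSymm) {s t : 𝕜}
    (hs : ∀ u : 𝕜, (A + u • B).rank ≤ (A + s • B).rank) {x y : n → 𝕜}
    (hx : (A + s • B) *ᵥ x = 0) (hy : (A + t • B) *ᵥ y = 0) : x ⬝ᵥ B *ᵥ y = 0 := by
  rcases eq_or_ne s t with rfl | hst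
  · exact pencil_ker_dotProduct_eq_zero_of_rank_max hA hB hs hx hy
  · exact pencil_ker_dotProduct_eq_zero_of_ne hA hB hst hx hy

theorem pencil_ker_dotProduct_pencil_mulVec_eq_zero (hA : A.IsSymm) (hB : B.IsSymm) {s t : 𝕜}
    (hs : ∀ u : 𝕜, (A + u • B).rank ≤ (A + s • B).rank) {x y : n → 𝕜}
    (hx : (A + s • B) *ᵥ x = 0) (hy : (A + t • B) *ᵥ y = 0) (u : 𝕜) :
    x ⬝ᵥ (A + u • B) *ᵥ y = 0 := by
  rw [dotProduct_pencil_mulVec A B x y u t, hy, dotProduct_zero,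
    pencil_ker_dotProduct_eq_zero hA hB hs hx hy, mul_zero, add_zero]

end Pencil

end Matrix

theorem vertex_span_dim_bounds_general (n r : ℕ)
    (A B : Matrix (Fin (n + 1)) (Fin (n + 1)) ℂ)
    (hA : A.IsSymm) (hB : B.IsSymm)
    (hge : ∀ t : ℂ, (A + t • B).rank + r ≤ n + 1)
    (hnc : ∃ t₁ t₂ : ℂ, (A + t₁ • B).rank + r = n + 1 ∧ (A + t₂ • B).rank + r = n + 1 ∧
      LinearMap.ker (A + t₁ • B).mulVecLin ≠ LinearMap.ker (A + t₂ • B).mulVecLin)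
    (W : Submodule ℂ (Fin (n + 1) → ℂ))
    (hW : W = ⨆ t ∈ {t : ℂ | (A + t • B).rank + r = n + 1},
      LinearMap.ker (A + t • B).mulVecLin) :
    r + 1 ≤ Module.finrank ℂ W ∧ 2 * Module.finrank ℂ W ≤ n + r + 1 := by
  subst hW
  have hmax (s : ℂ) (hs : (A + s • B).rank + r = n + 1) (u : ℂ) :
      (A + u • B).rank ≤ (A + s • B).rank := by
    have := hge u; omega
  have hker (s : ℂ) (hs : (A + s • B).rank + r = n + 1) :
      finrank ℂ (LinearMap.ker (A + s • B).mulVecLin) = r := by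
    have := LinearMap.finrank_range_add_finrank_ker (A + s • B).mulVecLin
    rw [finrank_fin_fun] at this
    unfold rank at hs
    omega
  obtain ⟨t₁, t₂, ht₁, ht₂, hne⟩ := hnc
  constructor
  · calc r + 1 ≤ finrank ℂ ↥(LinearMap.ker (A + t₁ • B).mulVecLin ⊔
          LinearMap.ker (A + t₂ • B).mulVecLin) := by
          have := Submodule.finrank_lt_finrank_sup_of_ne ((hker _ ht₁).trans (hker _ ht₂).symm) hne
          rwa [hker _ ht₁] at this
      _ ≤ _ := Submodule.finrank_mono (sup_le (le_iSup₂_of_le t₁ ht₁ le_rfl)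
          (le_iSup₂_of_le t₂ ht₂ le_rfl))
  · have hiso := (A + t₁ • B).toBilin'.biSup_le_orthogonal_biSup
      (s := {t : ℂ | (A + t • B).rank + r = n + 1})
      (U := fun t : ℂ => LinearMap.ker (A + t • B).mulVecLin) fun s hs t _ x hx y hy => by
        rw [toBilin'_apply']
        exact pencil_ker_dotProduct_pencil_mulVec_eq_zero hA hB (hmax s hs) hx hy t₁
    have hrad := Submodule.finrank_mono (hA.add (hB.smul t₁)).ker_toBilin'_le
    have hW := LinearMap.BilinForm.two_mul_finrank_le_of_le_orthogonal hiso
    rw [finrank_fin_fun] at hW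
    rw [hker _ ht₁] at hrad
    omega

/-- **Segre.** Let `n ≥ 2` and let `A`, `B` be symmetric `(n+1)×(n+1)`
complex matrices whose pencil has generic corank `r ≥ 1` (every member `A + tB` has
corank at least `r`, with equality for some `t`) and non-constant vertices.  Let `W` be
the linear span of the kernels `ker(A + tB)` over all `t` with `corank(A + tB) = r`.
Then `r + 1 ≤ dim W` and `2 · dim W ≤ n + r + 1`. -/
theorem vertex_span_dim_bounds (n r : ℕ) (hn : 2 ≤ n) (hr : 1 ≤ r)
    (A B : Matrix (Fin (n + 1)) (Fin (n + 1)) ℂ)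
    (hA : A.IsSymm) (hB : B.IsSymm)
    (hge : ∀ t : ℂ, (A + t • B).rank + r ≤ n + 1)
    (hmin : ∃ t : ℂ, (A + t • B).rank + r = n + 1)
    (hnc : ∃ t₁ t₂ : ℂ, (A + t₁ • B).rank + r = n + 1 ∧ (A + t₂ • B).rank + r = n + 1 ∧
      LinearMap.ker (A + t₁ • B).mulVecLin ≠ LinearMap.ker (A + t₂ • B).mulVecLin)
    (W : Submodule ℂ (Fin (n + 1) → ℂ))
    (hW : W = ⨆ t ∈ {t : ℂ | (A + t • B).rank + r = n + 1},
      LinearMap.ker (A + t • B).mulVecLin) :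
    r + 1 ≤ Module.finrank ℂ W ∧ 2 * Module.finrank ℂ W ≤ n + r + 1 :=
  vertex_span_dim_bounds_general n r A B hA hB hge hnc W hW
end

section
/- Let n ≥ 2 and let A and B be symmetric (n+1)×(n+1) complex matrices whose pencil has generic corank r ≥ 1 and non-constant vertices. Let d be the dimension of the linear subspace ⋂ ker(A+tB), the intersection taken over all t ∈ ℂ with corank(A+tB) = r. Then 3r ≤ n + 2d + 1. (In projective terms: if the common intersection of the vertices of the generic members has projective dimension s = d − 1, then r ≤ (n + 2s + 3)/3.) -/
/-!
Take two generic members `M₁ = A + t₁B` and `M₂ = A + t₂B` with different kernels `K₁`, `K₂`.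
Since the rank of `M₂ + sB` never exceeds that of `M₂`, the form `B` vanishes on `K₂`: otherwise
some `Bz`, `z ∈ K₂`, would lie outside `range M₂ = K₂^⊥` and the rank would jump for generic `s`.
As `M₁ = M₂ + (t₁ - t₂)B`, the space `U = K₁ + K₂` is then totally isotropic for `M₁`, and the
generic kernels meet exactly in `K₁ ∩ K₂`, of dimension `d`. A totally isotropic subspace `U`
satisfies `2 dim U ≤ (n + 1) + dim (U ∩ ker M₁)`; with `dim U = 2r - d` this is `3r ≤ n + 2d + 1`.
-/

open Matrix Module

open Polynomial in
theorem Matrix.finite_setOf_det_add_smul_eq_zero {K ι : Type*} [Field K] [Fintype ι]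
    [DecidableEq ι] (P Q : Matrix ι ι K) (hP : P.det ≠ 0) :
    {s : K | (P + s • Q).det = 0}.Finite := by
  set p : K[X] := (P.map C + (X : K[X]) • Q.map C).det
  have hp : ∀ s, p.eval s = (P + s • Q).det := fun s => by
    rw [← coe_evalRingHom, RingHom.map_det]
    congr 1
    ext i j
    simp only [RingHom.mapMatrix_apply, map_apply, add_apply, smul_apply, smul_eq_mul,
      coe_evalRingHom, eval_add, eval_mul, eval_X, eval_C]
  have hp0 : p ≠ 0 := fun h => hP (by simpa [h] using (hp 0).symm)
  simpa only [← hp, IsRoot.def] using p.finite_setOfPred_isRoot hp0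

theorem LinearIndependent.finite_setOf_not_linearIndependent_add_smul {K ι V : Type*} [Field K]
    [Fintype ι] [DecidableEq ι] [AddCommGroup V] [Module K V] {v w : ι → V}
    (hv : LinearIndependent K v) : {s : K | ¬LinearIndependent K (v + s • w)}.Finite := by
  obtain ⟨L, hL⟩ := (Fintype.linearCombination K v).exists_leftInverse_of_injective
    (LinearMap.ker_eq_bot.mpr
      (linearIndependent_iff_injective_fintypeLinearCombination.mp hv))
  have hLv : ∀ i, L (v i) = Pi.single i 1 := fun i => by
    simpa using LinearMap.congr_fun hL (Pi.single i 1)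
  refine ((1 : Matrix ι ι K).finite_setOf_det_add_smul_eq_zero (.of fun i => L (w i))
    (by simp)).subset fun s hs => ?_
  by_contra hdet
  refine hs (LinearIndependent.of_comp L ?_)
  have hrows : L ∘ (v + s • w) = fun i => (1 + s • of fun i => L (w i)) i := by
    ext i j
    simp [hLv, Pi.single_apply, one_apply, eq_comm]
  exact hrows ▸ linearIndependent_rows_of_det_ne_zero hdet

namespace Matrix

variable {K : Type*} [Field K] {m ι : Type*} [Fintype ι]

theorem rank_add_finrank_ker_mulVecLin_s4 (M : Matrix m ι K) :
    M.rank + finrank K (LinearMap.ker M.mulVecLin) = Fintype.card ι := by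
  rw [← finrank_fintype_fun_eq_card K]
  exact LinearMap.finrank_range_add_finrank_ker M.mulVecLin

theorem exists_rank_lt_rank_add_smul [Infinite K] {M B : Matrix m ι K} {z : ι → K}
    (hz : M *ᵥ z = 0) (hBz : B *ᵥ z ∉ LinearMap.range M.mulVecLin) :
    ∃ s : K, M.rank < (M + s • B).rank := by
  set R := LinearMap.range M.mulVecLin
  let b := Module.finBasis K R
  choose u hu using fun i => (b i).2
  -- for `s ≠ 0`, the vectors `v + s • w` are `(M + sB) u i` and `(M + sB) (s⁻¹ z)`
  set v : Fin (finrank K R + 1) → m → K := Fin.snoc (fun i => (b i : m → K)) (B *ᵥ z)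
  set w : Fin (finrank K R + 1) → m → K := Fin.snoc (fun i => B *ᵥ u i) 0
  have hv : LinearIndependent K v := by
    refine linearIndependent_finSnoc.mpr ⟨b.linearIndependent.map' R.subtype R.ker_subtype, ?_⟩
    have hspan : Set.range (fun i => (b i : m → K)) = R.subtype '' Set.range b :=
      Set.range_comp R.subtype b
    rwa [hspan, ← Submodule.map_span, b.span_eq, Submodule.map_top, Submodule.range_subtype]
  obtain ⟨s, hs⟩ := (hv.finite_setOf_not_linearIndependent_add_smul (w := w)).union
    (Set.finite_singleton 0) |>.exists_notMem
  simp only [Set.mem_union, Set.mem_ofPred_eq, not_or, not_not, Set.mem_singleton_iff] at hs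
  obtain ⟨hvw, hs0⟩ := hs
  have hspan : Submodule.span K (Set.range (v + s • w)) ≤
      LinearMap.range (M + s • B).mulVecLin := by
    rw [Submodule.span_le]
    rintro _ ⟨j, rfl⟩
    induction j using Fin.lastCases with
    | last => exact ⟨s⁻¹ • z, by simp [v, w, hz, smul_smul, hs0]⟩
    | cast i => exact ⟨u i, by simpa [v, w, add_mulVec] using hu i⟩
  have hle := Submodule.finrank_mono hspan
  rw [finrank_span_eq_card hvw, Fintype.card_fin] at hle
  exact ⟨s, hle⟩

theorem dotProduct_mulVec_comm_of_isSymm {S : Matrix ι ι K} (hS : S.IsSymm) (x y : ι → K) :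
    x ⬝ᵥ S *ᵥ y = y ⬝ᵥ S *ᵥ x := by
  rw [dotProduct_mulVec, ← mulVec_transpose, hS.eq, dotProduct_comm]

theorem mulVec_notMem_range_of_dotProduct_ne_zero {M : Matrix ι ι K} (hM : M.IsSymm)
    {z y : ι → K} (hz : M *ᵥ z = 0) (hzy : z ⬝ᵥ y ≠ 0) : y ∉ LinearMap.range M.mulVecLin := by
  rintro ⟨x, rfl⟩
  rw [mulVecLin_apply, dotProduct_mulVec_comm_of_isSymm hM, hz, dotProduct_zero] at hzy
  exact hzy rfl

theorem dotProduct_mulVec_self_eq_zero_of_forall_rank_le [Infinite K] {M B : Matrix ι ι K}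
    (hM : M.IsSymm) (hrank : ∀ s : K, (M + s • B).rank ≤ M.rank) {z : ι → K}
    (hz : M *ᵥ z = 0) : z ⬝ᵥ B *ᵥ z = 0 := by
  by_contra hzz
  obtain ⟨s, hs⟩ :=
    exists_rank_lt_rank_add_smul hz (mulVec_notMem_range_of_dotProduct_ne_zero hM hz hzz)
  exact (hrank s).not_gt hs

def IsTotallyIsotropic (S : Matrix ι ι K) (W : Submodule K (ι → K)) : Prop :=
  ∀ x ∈ W, ∀ y ∈ W, x ⬝ᵥ S *ᵥ y = 0

theorem isTotallyIsotropic_of_forall_dotProduct_mulVec_self [NeZero (2 : K)]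
    {S : Matrix ι ι K} (hS : S.IsSymm) {W : Submodule K (ι → K)}
    (hW : ∀ x ∈ W, x ⬝ᵥ S *ᵥ x = 0) : S.IsTotallyIsotropic W := by
  intro x hx y hy
  have hxy := hW (x + y) (W.add_mem hx hy)
  rw [mulVec_add, dotProduct_add, add_dotProduct, add_dotProduct, hW x hx, hW y hy,
    dotProduct_mulVec_comm_of_isSymm hS y x, zero_add, add_zero, ← two_mul] at hxy
  exact (mul_eq_zero.mp hxy).resolve_left two_ne_zero

theorem IsTotallyIsotropic.ker_sup {S : Matrix ι ι K} (hS : S.IsSymm) {W : Submodule K (ι → K)}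
    (hW : S.IsTotallyIsotropic W) : S.IsTotallyIsotropic (LinearMap.ker S.mulVecLin ⊔ W) := by
  intro x hx y hy
  obtain ⟨a, ha, b, hb, rfl⟩ := Submodule.mem_sup.mp hx
  obtain ⟨c, hc, e, he, rfl⟩ := Submodule.mem_sup.mp hy
  rw [LinearMap.mem_ker, mulVecLin_apply] at ha hc
  rw [add_dotProduct, dotProduct_mulVec_comm_of_isSymm hS a, ha, dotProduct_zero, zero_add,
    mulVec_add, hc, zero_add, hW b hb e he]

theorem IsTotallyIsotropic.two_mul_finrank_le {S : Matrix ι ι K} {W : Submodule K (ι → K)}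
    (hW : S.IsTotallyIsotropic W) :
    2 * finrank K W ≤ Fintype.card ι + finrank K ↥(W ⊓ LinearMap.ker Sᵀ.mulVecLin) := by
  classical
  have hker : LinearMap.ker (toBilin' S) = LinearMap.ker Sᵀ.mulVecLin := by
    have : toBilin' S = (dotProductEquiv K ι).toLinearMap ∘ₗ Sᵀ.mulVecLin := by
      ext x y
      simp [toBilin'_apply']
    rw [this, LinearEquiv.ker_comp]
  have hWW : W ≤ (toBilin' S).orthogonal W := fun y hy x hx => by
    simpa [toBilin'_apply'] using hW x hx y hy
  have horth := LinearMap.BilinForm.finrank_add_finrank_orthogonal' (B := toBilin' S) W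
  rw [hker, finrank_fintype_fun_eq_card] at horth
  have := Submodule.finrank_mono hWW
  omega

theorem add_smul_mulVec_of_add_smul_mulVec_eq_zero (A B : Matrix m ι K) {t₁ t₂ : K}
    {x : ι → K} (hx : (A + t₂ • B) *ᵥ x = 0) : (A + t₁ • B) *ᵥ x = (t₁ - t₂) • B *ᵥ x := by
  rw [← sub_zero ((A + t₁ • B) *ᵥ x), ← hx, ← sub_mulVec, add_sub_add_left_eq_sub, ← sub_smul,
    smul_mulVec]

theorem ker_add_smul_inf_ker_add_smul_le (A B : Matrix m ι K) {t₁ t₂ : K} (ht : t₁ ≠ t₂)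
    (t : K) : LinearMap.ker (A + t₁ • B).mulVecLin ⊓ LinearMap.ker (A + t₂ • B).mulVecLin ≤
      LinearMap.ker (A + t • B).mulVecLin := by
  intro x hx
  obtain ⟨hx₁, hx₂⟩ := Submodule.mem_inf.mp hx
  rw [LinearMap.mem_ker, mulVecLin_apply] at hx₁ hx₂ ⊢
  have hBx : B *ᵥ x = 0 := by
    rw [add_smul_mulVec_of_add_smul_mulVec_eq_zero A B hx₂, smul_eq_zero] at hx₁
    exact hx₁.resolve_left (sub_ne_zero.mpr ht)
  rw [add_smul_mulVec_of_add_smul_mulVec_eq_zero A B hx₂, hBx, smul_zero]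

theorem iInf_ker_add_smul_eq_inf (A B : Matrix m ι K) {S : Set K} {t₁ t₂ : K} (h₁ : t₁ ∈ S)
    (h₂ : t₂ ∈ S) (ht : t₁ ≠ t₂) : ⨅ t ∈ S, LinearMap.ker (A + t • B).mulVecLin =
      LinearMap.ker (A + t₁ • B).mulVecLin ⊓ LinearMap.ker (A + t₂ • B).mulVecLin :=
  le_antisymm (le_inf (iInf₂_le t₁ h₁) (iInf₂_le t₂ h₂))
    (le_iInf₂ fun t _ => ker_add_smul_inf_ker_add_smul_le A B ht t)

end Matrix

theorem vertex_intersection_bound_general (n r : ℕ)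
    (A B : Matrix (Fin (n + 1)) (Fin (n + 1)) ℂ)
    (hA : A.IsSymm) (hB : B.IsSymm)
    (hge : ∀ t : ℂ, (A + t • B).rank + r ≤ n + 1)
    (hnc : ∃ t₁ t₂ : ℂ, (A + t₁ • B).rank + r = n + 1 ∧ (A + t₂ • B).rank + r = n + 1 ∧
      LinearMap.ker (A + t₁ • B).mulVecLin ≠ LinearMap.ker (A + t₂ • B).mulVecLin)
    (d : ℕ)
    (hd : d = Module.finrank ℂ
      ↥(⨅ t ∈ {t : ℂ | (A + t • B).rank + r = n + 1}, LinearMap.ker (A + t • B).mulVecLin)) :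
    3 * r ≤ n + 2 * d + 1 := by
  obtain ⟨t₁, t₂, h₁, h₂, hne⟩ := hnc
  have ht : t₁ ≠ t₂ := by rintro rfl; exact hne rfl
  have hsymm : ∀ t : ℂ, (A + t • B).IsSymm := fun t => hA.add (hB.smul t)
  have hker : ∀ t : ℂ, (A + t • B).rank + r = n + 1 →
      finrank ℂ (LinearMap.ker (A + t • B).mulVecLin) = r := fun t hgen => by
    have := rank_add_finrank_ker_mulVecLin_s4 (A + t • B)
    rw [Fintype.card_fin] at this
    omega
  set K₁ := LinearMap.ker (A + t₁ • B).mulVecLin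
  set K₂ := LinearMap.ker (A + t₂ • B).mulVecLin
  have hBK₂ : B.IsTotallyIsotropic K₂ :=
    isTotallyIsotropic_of_forall_dotProduct_mulVec_self hB fun x hx =>
      dotProduct_mulVec_self_eq_zero_of_forall_rank_le (hsymm t₂)
        (fun s => by have := hge (t₂ + s); rw [add_assoc, ← add_smul]; omega) hx
  have hU : (A + t₁ • B).IsTotallyIsotropic (K₁ ⊔ K₂) :=
    IsTotallyIsotropic.ker_sup (hsymm t₁) fun x hx y hy => by
      rw [add_smul_mulVec_of_add_smul_mulVec_eq_zero A B hy, dotProduct_smul, hBK₂ x hx y hy,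
        smul_zero]
  have hbound := hU.two_mul_finrank_le
  rw [(hsymm t₁).eq, inf_eq_right.mpr le_sup_left, hker t₁ h₁, Fintype.card_fin] at hbound
  rw [iInf_ker_add_smul_eq_inf A B h₁ h₂ ht] at hd
  have := Submodule.finrank_sup_add_finrank_inf_eq K₁ K₂
  rw [← hd, hker t₁ h₁, hker t₂ h₂] at this
  omega

/-- **Segre.** Let `n ≥ 2` and let `A`, `B` be symmetric `(n+1)×(n+1)`
complex matrices whose pencil has generic corank `r ≥ 1` and non-constant vertices.
Let `d` be the dimension of the intersection `⋂ ker(A + tB)` over all `t` with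
`corank(A + tB) = r`.  Then `3r ≤ n + 2d + 1`. -/
theorem vertex_intersection_bound (n r : ℕ) (hn : 2 ≤ n) (hr : 1 ≤ r)
    (A B : Matrix (Fin (n + 1)) (Fin (n + 1)) ℂ)
    (hA : A.IsSymm) (hB : B.IsSymm)
    (hge : ∀ t : ℂ, (A + t • B).rank + r ≤ n + 1)
    (hmin : ∃ t : ℂ, (A + t • B).rank + r = n + 1)
    (hnc : ∃ t₁ t₂ : ℂ, (A + t₁ • B).rank + r = n + 1 ∧ (A + t₂ • B).rank + r = n + 1 ∧
      LinearMap.ker (A + t₁ • B).mulVecLin ≠ LinearMap.ker (A + t₂ • B).mulVecLin)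
    (d : ℕ)
    (hd : d = Module.finrank ℂ
      ↥(⨅ t ∈ {t : ℂ | (A + t • B).rank + r = n + 1}, LinearMap.ker (A + t • B).mulVecLin)) :
    3 * r ≤ n + 2 * d + 1 :=
  vertex_intersection_bound_general n r A B hA hB hge hnc d hd
end

section
/- Let n ≥ 2 and let A and B be symmetric (n+1)×(n+1) complex matrices whose pencil has generic corank 1 (every member is singular, and corank(A+tB) = 1 for some, hence all but finitely many, t ∈ ℂ) and non-constant vertices. Let W be the linear span of the union of the kernels ker(A+tB) over all t with corank(A+tB) = 1, and set m = dim W − 1. Then there exist vectors c₀, c₁, …, c_m ∈ ℂ^{n+1}, linearly independent (hence a basis of W), such that for every t ∈ ℂ with corank(A+tB) = 1 the kernel of A+tB is spanned by v(t) = c₀ + c₁t + ⋯ + c_m t^m. (That is, the closure of the vertex locus is a rational normal curve of degree m in the projective subspace ℙ(W) ≅ ℙ^m, the case r = 1 of the statement that the vertex variety of the pencil is a variety of minimal degree m − r + 1 in its span.) -/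
/-!
Since `det (A + XB)` vanishes identically, some nonzero polynomial vector
`v(X) = c₀ + c₁X + ⋯ + c_e Xᵉ` satisfies `(A + XB) v(X) = 0`; take one of least degree. Its
coefficients satisfy `A c₀ = 0` and `A c_{k+1} + B c_k = 0`, and minimality makes `c₀, …, c_e`
linearly independent (Kronecker): given `∑ αᵢ cᵢ = 0`, the sums `q_j = ∑ αᵢ c_{i+j}` satisfy the
same recurrence with `q₀ = 0`, so `(q_{j+1})_j` is a kernel vector of smaller degree and vanishes;
yet `q_{e-i₀} = αᵢ₀ c_e` for the least `i₀` with `αᵢ₀ ≠ 0`.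
Hence `v(t) ≠ 0` spans `ker (A + tB)` whenever the corank is `1`, which happens off the finitely
many roots of a nonvanishing minor. A polynomial curve evaluated at infinitely many points spans
the same space as its coefficients, so `W = span (c₀, …, c_e)` and `m = e`.
-/

open Matrix Polynomial

namespace Submodule

variable {K V : Type*} [Field K] [AddCommGroup V] [Module K V] {N : ℕ} {S : Set K}

theorem mem_of_forall_sum_pow_smul_mem (p : Submodule K V) (x : Fin N → V) (hS : S.Infinite)
    (h : ∀ t ∈ S, ∑ i : Fin N, t ^ (i : ℕ) • x i ∈ p) (i : Fin N) : x i ∈ p := by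
  rw [← Quotient.mk_eq_zero]
  refine (Module.forall_dual_apply_eq_zero_iff K _).mp fun φ => ?_
  let ψ := φ ∘ₗ p.mkQ
  let f : K[X] := ∑ j, C (ψ (x j)) * X ^ (j : ℕ)
  have hf : f = 0 := by
    refine eq_zero_of_infinite_isRoot f (hS.mono fun t ht => ?_)
    have hψ : ψ (∑ i : Fin N, t ^ (i : ℕ) • x i) = 0 := by
      rw [LinearMap.comp_apply, mkQ_apply, (Quotient.mk_eq_zero p).mpr (h t ht), map_zero]
    show f.IsRoot t
    simp only [IsRoot, f, eval_finsetSum, eval_mul, eval_C, eval_pow, eval_X, ← hψ, map_sum,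
      map_smul, smul_eq_mul, mul_comm]
  show ψ (x i) = 0
  simpa [f, finsetSum_coeff, coeff_C_mul, coeff_X_pow, Fin.val_inj] using congrArg (coeff · i) hf

theorem iSup_span_sum_pow_smul (x : Fin N → V) (hS : S.Infinite) :
    ⨆ t ∈ S, K ∙ ∑ i : Fin N, t ^ (i : ℕ) • x i = span K (Set.range x) := by
  refine le_antisymm (iSup₂_le fun t _ => (span_singleton_le_iff_mem _ _).mpr
    (sum_mem fun i _ => smul_mem _ _ (subset_span ⟨i, rfl⟩))) (span_le.mpr ?_)
  rintro _ ⟨i, rfl⟩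
  exact mem_of_forall_sum_pow_smul_mem _ x hS
    (fun t ht => le_iSup₂ (f := fun t _ => K ∙ ∑ i : Fin N, t ^ (i : ℕ) • x i) t ht
      (mem_span_singleton_self _)) i

end Submodule

namespace Matrix

variable {K ι : Type*} [Field K] [Fintype ι]

noncomputable def pencil (A B : Matrix ι ι K) : Matrix ι ι K[X] :=
  A.map C + (X : K[X]) • B.map C

/-- The coefficients `c k` of a polynomial vector `∑ k, c k Xᵏ` annihilated by `pencil A B`. -/
def IsPencilKernelSeq (A B : Matrix ι ι K) (c : ℕ → ι → K) : Prop :=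
  A *ᵥ c 0 = 0 ∧ ∀ k, A *ᵥ c (k + 1) + B *ᵥ c k = 0

section Pencil

variable (A B : Matrix ι ι K)

theorem coeff_pencil_mulVec_zero (w : ι → K[X]) (i : ι) :
    ((pencil A B *ᵥ w) i).coeff 0 = (A *ᵥ fun j => (w j).coeff 0) i := by
  simp [pencil, mulVec, dotProduct, add_mul, mul_assoc, mul_coeff_zero]

theorem coeff_pencil_mulVec_succ (w : ι → K[X]) (i : ι) (k : ℕ) :
    ((pencil A B *ᵥ w) i).coeff (k + 1) =
      (A *ᵥ fun j => (w j).coeff (k + 1)) i + (B *ᵥ fun j => (w j).coeff k) i := by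
  simp [pencil, mulVec, dotProduct, add_mul, mul_assoc, coeff_X_mul, Finset.sum_add_distrib]

theorem isPencilKernelSeq_coeff {w : ι → K[X]} (hw : pencil A B *ᵥ w = 0) :
    IsPencilKernelSeq A B fun k i => (w i).coeff k := by
  refine ⟨funext fun i => ?_, fun k => funext fun i => ?_⟩
  · simpa [hw] using (coeff_pencil_mulVec_zero A B w i).symm
  · simpa [hw] using (coeff_pencil_mulVec_succ A B w i k).symm

variable [DecidableEq ι]

theorem evalRingHom_mapMatrix_pencil (t : K) :
    (evalRingHom t).mapMatrix (pencil A B) = A + t • B := by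
  ext i j
  simp only [pencil, RingHom.mapMatrix_apply, map_apply, coe_evalRingHom, add_apply, smul_apply,
    smul_eq_mul, eval_add, eval_mul, eval_X, eval_C]

theorem det_pencil_eq_zero [Infinite K] (h : ∀ t : K, (A + t • B).det = 0) :
    (pencil A B).det = 0 :=
  Polynomial.funext fun t => by
    rw [← coe_evalRingHom, RingHom.map_det, evalRingHom_mapMatrix_pencil, h, map_zero]

theorem finite_setOf_rank_lt (t₀ : K) :
    {t : K | (A + t • B).rank < (A + t₀ • B).rank}.Finite := by
  obtain ⟨V, U, e, -, -, hVU⟩ := exists_rank_normal_form (A + t₀ • B)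
  -- `s` picks out the identity block of the rank normal form of `A + t₀ • B`.
  let s : Fin (A + t₀ • B).rank → ι := e.symm ∘ Sum.inl
  let g : K[X] := ((V.map C * pencil A B * U.map C).submatrix s s).det
  have hg (t : K) : g.eval t = ((V * (A + t • B) * U).submatrix s s).det := by
    rw [← coe_evalRingHom, RingHom.map_det, RingHom.mapMatrix_apply, ← submatrix_map,
      ← RingHom.mapMatrix_apply, map_mul, map_mul, evalRingHom_mapMatrix_pencil]
    simp [RingHom.mapMatrix_apply, Matrix.map_map, Function.comp_def]
  have hg₀ : g.eval t₀ = 1 := by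
    rw [hg, hVU, submatrix_submatrix, ← Function.comp_assoc, Equiv.self_comp_symm]
    exact det_one
  have hg_ne : g ≠ 0 := fun h0 => by
    rw [h0, eval_zero] at hg₀
    exact zero_ne_one hg₀
  refine (finite_setOfPred_isRoot hg_ne).subset fun t (ht : (A + t • B).rank < _) => ?_
  by_contra hdet
  rw [Set.mem_ofPred_eq, IsRoot.def, hg] at hdet
  refine ht.not_ge ?_
  calc (A + t₀ • B).rank = ((V * (A + t • B) * U).submatrix s s).rank := by
        rw [rank_of_det_ne_zero hdet, Fintype.card_fin]
    _ ≤ (V * (A + t • B) * U).rank := rank_submatrix_le _ _ _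
    _ ≤ (A + t • B).rank := (rank_mul_le_left _ _).trans (rank_mul_le_right _ _)

end Pencil

namespace IsPencilKernelSeq

variable {A B : Matrix ι ι K} {c : ℕ → ι → K}

theorem mulVec_sum_range (hc : IsPencilKernelSeq A B c) (t : K) (N : ℕ) :
    (A + t • B) *ᵥ ∑ k ∈ Finset.range (N + 1), t ^ k • c k = t ^ (N + 1) • B *ᵥ c N := by
  induction N with
  | zero => simp [add_mulVec, smul_mulVec, hc.1]
  | succ N ih =>
    rw [Finset.sum_range_succ, mulVec_add, ih]
    simp only [mulVec_smul, add_mulVec, smul_mulVec, smul_add, smul_smul]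
    linear_combination (norm := module) t ^ (N + 1) • hc.2 N

theorem mulVec_sum_fin_eq_zero {e : ℕ} (hc : IsPencilKernelSeq A B c)
    (hvanish : ∀ k, e < k → c k = 0) (t : K) :
    (A + t • B) *ᵥ ∑ i : Fin (e + 1), t ^ (i : ℕ) • c i = 0 := by
  have hlast : c (e + 1) = 0 := hvanish _ e.lt_succ_self
  calc (A + t • B) *ᵥ ∑ i : Fin (e + 1), t ^ (i : ℕ) • c i
      = (A + t • B) *ᵥ ∑ k ∈ Finset.range (e + 2), t ^ k • c k := by
        rw [Finset.sum_range_succ, hlast, smul_zero, add_zero,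
          Fin.sum_univ_eq_sum_range (fun k => t ^ k • c k)]
    _ = 0 := by rw [hc.mulVec_sum_range, hlast, mulVec_zero, smul_zero]

theorem linearIndependent (hc : IsPencilKernelSeq A B c) {d : ℕ}
    (hvanish : ∀ k, d < k → c k = 0) (hd : c d ≠ 0)
    (hmin : ∀ q, IsPencilKernelSeq A B q → (∀ k, d ≤ k → q k = 0) → q = 0) :
    LinearIndependent K fun i : Fin (d + 1) => c i := by
  rw [Fintype.linearIndependent_iff]
  intro α hα
  set q : ℕ → ι → K := fun j => ∑ i, α i • c (i + j) with hq
  have hrec (j : ℕ) : A *ᵥ q (j + 1) + B *ᵥ q j = 0 := by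
    simp only [hq, mulVec_sum, mulVec_smul, ← Finset.sum_add_distrib, ← smul_add, ← add_assoc,
      hc.2, smul_zero, Finset.sum_const_zero]
  have hq₀ : q 0 = 0 := hα
  have hshift : IsPencilKernelSeq A B fun j => q (j + 1) :=
    ⟨by simpa [hq₀] using hrec 0, fun j => hrec (j + 1)⟩
  have hq_zero (j : ℕ) : q j = 0 := by
    cases j with
    | zero => exact hq₀
    | succ j =>
      refine congrFun (hmin _ hshift fun k hk => Finset.sum_eq_zero fun i _ => ?_) j
      rw [hvanish _ (by omega), smul_zero]
  by_contra! hne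
  obtain ⟨i₀, hi₀, hlow⟩ := wellFounded_lt.has_min {i | α i ≠ 0} hne
  have hq_top : q (d - i₀) = α i₀ • c d := by
    refine (Finset.sum_eq_single i₀ (fun i _ hi => ?_) (by simp)).trans ?_
    · rcases lt_or_gt_of_ne hi with hlt | hgt
      · rw [not_not.mp (hlow i · hlt), zero_smul]
      · rw [hvanish _ (by omega), smul_zero]
    · rw [Nat.add_sub_cancel' (by omega)]
  exact smul_ne_zero hi₀ hd (hq_top ▸ hq_zero _)

theorem ker_mulVecLin_eq_span_sum {e : ℕ} (hc : IsPencilKernelSeq A B c)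
    (hvanish : ∀ k, e < k → c k = 0) (hli : LinearIndependent K fun i : Fin (e + 1) => c i)
    {t : K} (ht : (A + t • B).rank + 1 = Fintype.card ι) :
    LinearMap.ker (A + t • B).mulVecLin = K ∙ ∑ i : Fin (e + 1), t ^ (i : ℕ) • c i := by
  refine eq_span_singleton_of_mem_of_finrank_eq_one ?_ (hc.mulVec_sum_fin_eq_zero hvanish t) ?_
  · have := LinearMap.finrank_range_add_finrank_ker (A + t • B).mulVecLin
    rw [Module.finrank_fintype_fun_eq_card] at this
    exact Nat.add_left_cancel (this.trans ht.symm)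
  · intro h0
    have := Fintype.linearIndependent_iff.mp hli _ h0 0
    simp at this

end IsPencilKernelSeq

variable (A B : Matrix ι ι K) [DecidableEq ι]

theorem exists_isPencilKernelSeq [Infinite K] (h : ∀ t : K, (A + t • B).det = 0) :
    ∃ d, ∃ c, IsPencilKernelSeq A B c ∧ c ≠ 0 ∧ ∀ k, d ≤ k → c k = 0 := by
  obtain ⟨w, hw₀, hw⟩ := exists_mulVec_eq_zero_iff.mpr (det_pencil_eq_zero A B h)
  refine ⟨Finset.univ.sup (fun i => (w i).natDegree) + 1, _, isPencilKernelSeq_coeff A B hw,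
    fun hc => hw₀ (funext fun i => Polynomial.ext fun k => congrFun (congrFun hc k) i),
    fun k hk => funext fun i => coeff_eq_zero_of_natDegree_lt ?_⟩
  exact (Finset.le_sup (f := fun i => (w i).natDegree) (Finset.mem_univ i)).trans_lt hk

theorem exists_isPencilKernelSeq_linearIndependent [Infinite K]
    (h : ∀ t : K, (A + t • B).det = 0) :
    ∃ (e : ℕ) (c : ℕ → ι → K), IsPencilKernelSeq A B c ∧ (∀ k, e < k → c k = 0) ∧
      LinearIndependent K fun i : Fin (e + 1) => c i := by
  classical
  have hex := exists_isPencilKernelSeq A B h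
  obtain ⟨c, hc, hc₀, hvanish⟩ := Nat.find_spec hex
  obtain ⟨e, he⟩ : ∃ e, Nat.find hex = e + 1 :=
    Nat.exists_eq_succ_of_ne_zero fun h0 => hc₀ (funext fun k => hvanish k (h0 ▸ k.zero_le))
  have hmin (q : ℕ → ι → K) (hq : IsPencilKernelSeq A B q) (hqe : ∀ k, e ≤ k → q k = 0) :
      q = 0 := by
    by_contra hq₀
    exact Nat.find_min hex (he ▸ e.lt_succ_self) ⟨q, hq, hq₀, hqe⟩
  refine ⟨e, c, hc, fun k hk => hvanish k (by omega), hc.linearIndependent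
    (fun k hk => hvanish k (by omega)) (fun hce => hc₀ (hmin c hc fun k hk => ?_)) hmin⟩
  obtain rfl | hlt := hk.eq_or_lt
  exacts [hce, hvanish k (by omega)]

end Matrix

theorem vertex_curve_is_rational_normal_general (n m : ℕ)
    (A B : Matrix (Fin (n + 1)) (Fin (n + 1)) ℂ)
    (hge : ∀ t : ℂ, (A + t • B).rank + 1 ≤ n + 1)
    (hmin : ∃ t : ℂ, (A + t • B).rank + 1 = n + 1)
    (W : Submodule ℂ (Fin (n + 1) → ℂ))
    (hW : W = ⨆ t ∈ {t : ℂ | (A + t • B).rank + 1 = n + 1},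
      LinearMap.ker (A + t • B).mulVecLin)
    (hm : m + 1 = Module.finrank ℂ W) :
    ∃ c : Fin (m + 1) → (Fin (n + 1) → ℂ), LinearIndependent ℂ c ∧
      ∀ t : ℂ, (A + t • B).rank + 1 = n + 1 →
        LinearMap.ker (A + t • B).mulVecLin =
          Submodule.span ℂ {∑ i : Fin (m + 1), t ^ (i : ℕ) • c i} := by
  set S := {t : ℂ | (A + t • B).rank + 1 = n + 1}
  have hdet (t : ℂ) : (A + t • B).det = 0 := by
    by_contra h
    have := hge t
    rw [rank_of_det_ne_zero h, Fintype.card_fin] at this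
    omega
  obtain ⟨e, c, hc, hvanish, hli⟩ := exists_isPencilKernelSeq_linearIndependent A B hdet
  have hker (t : ℂ) (ht : (A + t • B).rank + 1 = n + 1) :=
    hc.ker_mulVecLin_eq_span_sum hvanish hli (ht.trans (Fintype.card_fin _).symm)
  have hS : S.Infinite := by
    obtain ⟨t₀, ht₀⟩ := hmin
    refine (finite_setOf_rank_lt A B t₀).infinite_compl.mono fun t ht => ?_
    have := hge t
    simp only [Set.mem_compl_iff, Set.mem_ofPred_eq, not_lt] at ht
    show (A + t • B).rank + 1 = n + 1
    omega
  have hWc : W = Submodule.span ℂ (Set.range fun i : Fin (e + 1) => c i) := by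
    rw [hW, ← Submodule.iSup_span_sum_pow_smul _ hS]
    exact biSup_congr hker
  obtain rfl : m = e := by
    rw [hWc, finrank_span_eq_card hli, Fintype.card_fin] at hm
    omega
  exact ⟨fun i => c i, hli, hker⟩

/-- **Segre.** Let `n ≥ 2` and let `A`, `B` be symmetric `(n+1)×(n+1)`
complex matrices whose pencil has generic corank `1` and non-constant vertices.  Let `W`
be the span of the kernels `ker(A+tB)` over all `t` with `corank(A+tB) = 1`, and
`m = dim W − 1`.  Then there are linearly independent `c₀, …, c_m` such that for every
`t` with `corank(A+tB) = 1` the kernel of `A+tB` is spanned by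
`v(t) = c₀ + c₁t + ⋯ + c_m tᵐ` (a rational normal curve of degree `m` in `ℙ(W)`). -/
theorem vertex_curve_is_rational_normal (n m : ℕ) (hn : 2 ≤ n)
    (A B : Matrix (Fin (n + 1)) (Fin (n + 1)) ℂ)
    (hA : A.IsSymm) (hB : B.IsSymm)
    (hge : ∀ t : ℂ, (A + t • B).rank + 1 ≤ n + 1)
    (hmin : ∃ t : ℂ, (A + t • B).rank + 1 = n + 1)
    (hnc : ∃ t₁ t₂ : ℂ, (A + t₁ • B).rank + 1 = n + 1 ∧ (A + t₂ • B).rank + 1 = n + 1 ∧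
      LinearMap.ker (A + t₁ • B).mulVecLin ≠ LinearMap.ker (A + t₂ • B).mulVecLin)
    (W : Submodule ℂ (Fin (n + 1) → ℂ))
    (hW : W = ⨆ t ∈ {t : ℂ | (A + t • B).rank + 1 = n + 1},
      LinearMap.ker (A + t • B).mulVecLin)
    (hm : m + 1 = Module.finrank ℂ W) :
    ∃ c : Fin (m + 1) → (Fin (n + 1) → ℂ), LinearIndependent ℂ c ∧
      ∀ t : ℂ, (A + t • B).rank + 1 = n + 1 →
        LinearMap.ker (A + t • B).mulVecLin =
          Submodule.span ℂ {∑ i : Fin (m + 1), t ^ (i : ℕ) • c i} :=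
  vertex_curve_is_rational_normal_general n m A B hge hmin W hW hm
end

section
/- Let s ≥ 1, d ≥ 3, and let f be a nonzero homogeneous polynomial of degree d in the variables z₀, …, z_s over ℂ. Suppose all polar quadrics of f coincide; that is, suppose there is a nonzero homogeneous quadratic polynomial q such that for all vectors b₁, …, b_{d−2} ∈ ℂ^{s+1} the iterated directional derivative ∂_{b₁}⋯∂_{b_{d−2}} f is a scalar multiple of q. Then there exist a nonzero linear form ℓ and a nonzero constant c ∈ ℂ with f = c·ℓ^d, and every nonzero polar quadric of f is a nonzero scalar multiple of ℓ². (Geometrically: the hypersurface V = {f = 0} is a hyperplane H counted with multiplicity d, and the common polar quadric is 2H.) -/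
/-- The directional derivative `∂_b = Σᵢ bᵢ ∂/∂zᵢ` of a multivariate polynomial. -/
noncomputable def dirDeriv {g : ℕ} (b : Fin g → ℂ) (f : MvPolynomial (Fin g) ℂ) :
    MvPolynomial (Fin g) ℂ :=
  ∑ i, b i • MvPolynomial.pderiv i f

/-!
Since partial derivatives commute, `∂ᵢ p = cᵢ • r` for all `i` forces `cᵢ • ∂ⱼ r = cⱼ • ∂ᵢ r`.
For `r = L ^ (n + 1)` with `L` linear this makes `c` proportional to the gradient of `L`, so
`p - t • L ^ (n + 2)` has zero gradient for a suitable `t` and vanishes by Euler's identity;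
induction on the degree then shows that a form all of whose polar quadrics are multiples of
`L ^ 2` is a multiple of `L ^ d`. To see that the common polar quadric `q` is such a square,
take a cubic polar `h` with a nonzero partial derivative: all partials of `h` are multiples
of `q`, so all partials of `q` are multiples of one linear form `m`, and `q` is a multiple
of `m ^ 2` by the same argument.
-/

namespace MvPolynomial

section CommRing

variable {R σ : Type*} [CommRing R]

theorem pderiv_pderiv_comm (i j : σ) (p : MvPolynomial σ R) :
    pderiv i (pderiv j p) = pderiv j (pderiv i p) := by
  have h : ⁅pderiv i, pderiv j⁆ = (0 : Derivation R (MvPolynomial σ R) (MvPolynomial σ R)) :=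
    derivation_ext fun k => by
      classical
      rw [Derivation.commutator_apply]
      simp [pderiv_X, Pi.single_apply, apply_ite (pderiv _)]
  have hp := congr($h p)
  rw [Derivation.commutator_apply] at hp
  simpa [sub_eq_zero] using hp

theorem smul_pderiv_comm_of_pderiv_eq_smul {p r : MvPolynomial σ R} {c : σ → R}
    (hc : ∀ i, pderiv i p = c i • r) (i j : σ) :
    c i • pderiv j r = c j • pderiv i r := by
  rw [← (pderiv j).map_smul, ← (pderiv i).map_smul, ← hc, ← hc, pderiv_pderiv_comm]

noncomputable def iterPDeriv (l : List σ) (p : MvPolynomial σ R) : MvPolynomial σ R :=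
  l.foldr (fun i q => pderiv i q) p

@[simp]
theorem iterPDeriv_cons (i : σ) (l : List σ) (p : MvPolynomial σ R) :
    iterPDeriv (i :: l) p = pderiv i (iterPDeriv l p) := rfl

theorem iterPDeriv_append_singleton (l : List σ) (i : σ) (p : MvPolynomial σ R) :
    iterPDeriv (l ++ [i]) p = iterPDeriv l (pderiv i p) := by
  simp [iterPDeriv, List.foldr_append]

theorem IsHomogeneous.pderiv_eq_C {L : MvPolynomial σ R} (hL : L.IsHomogeneous 1) (i : σ) :
    pderiv i L = C (coeff 0 (pderiv i L)) := by
  have h : (pderiv i L).IsHomogeneous 0 := hL.pderiv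
  exact totalDegree_eq_zero_iff_eq_C.mp ((totalDegree_zero_iff_isHomogeneous σ).mpr h)

theorem pderiv_pow_succ_of_pderiv_eq_C {L : MvPolynomial σ R} {i : σ} {a : R}
    (h : pderiv i L = C a) (m : ℕ) :
    pderiv i (L ^ (m + 1)) = ((m + 1 : R) * a) • L ^ m := by
  rw [pderiv_pow, h, smul_eq_C_mul]
  simp only [map_mul, map_add, map_natCast, map_one, add_tsub_cancel_right, Nat.cast_add,
    Nat.cast_one]
  ring

end CommRing

section Field

variable {K σ : Type*} [Field K] [CharZero K] [Fintype σ]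

theorem IsHomogeneous.eq_zero_of_forall_pderiv_eq_zero {p : MvPolynomial σ K} {n : ℕ}
    (hp : p.IsHomogeneous n) (hn : n ≠ 0) (h : ∀ i, pderiv i p = 0) : p = 0 := by
  have euler := hp.sum_X_mul_pderiv
  simp only [h, mul_zero, Finset.sum_const_zero] at euler
  rw [eq_comm, ← Nat.cast_smul_eq_nsmul K, smul_eq_zero] at euler
  exact euler.resolve_left (Nat.cast_ne_zero.mpr hn)

theorem IsHomogeneous.exists_pderiv_ne_zero {p : MvPolynomial σ K} {n : ℕ}
    (hp : p.IsHomogeneous n) (hn : n ≠ 0) (h : p ≠ 0) : ∃ i, pderiv i p ≠ 0 := by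
  by_contra! h'
  exact h (hp.eq_zero_of_forall_pderiv_eq_zero hn h')

theorem IsHomogeneous.exists_eq_smul_pow_of_pderiv_eq_smul_pow {L p : MvPolynomial σ K}
    {n : ℕ} (hp : p.IsHomogeneous (n + 2)) (hL : L.IsHomogeneous 1) (hL0 : L ≠ 0)
    {c : σ → K} (hc : ∀ i, pderiv i p = c i • L ^ (n + 1)) :
    ∃ t : K, p = t • L ^ (n + 2) := by
  obtain ⟨a, ha⟩ : ∃ a : σ → K, ∀ i, pderiv i L = C (a i) := ⟨_, hL.pderiv_eq_C⟩
  obtain ⟨j, hj⟩ := hL.exists_pderiv_ne_zero one_ne_zero hL0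
  have haj : a j ≠ 0 := by rintro h; rw [ha, h, map_zero] at hj; exact hj rfl
  have hcross : ∀ i, c i * a j = c j * a i := by
    intro i
    have h := smul_pderiv_comm_of_pderiv_eq_smul hc i j
    rw [pderiv_pow_succ_of_pderiv_eq_C (ha j), pderiv_pow_succ_of_pderiv_eq_C (ha i), smul_smul,
      smul_smul] at h
    exact mul_left_cancel₀ (Nat.cast_add_one_ne_zero n)
      (by linear_combination smul_left_injective K (pow_ne_zero n hL0) h)
  refine ⟨c j / ((n + 2) * a j), sub_eq_zero.mp ?_⟩
  have hpow : (L ^ (n + 2)).IsHomogeneous (n + 2) := by simpa using hL.pow (n + 2)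
  refine (hp.sub (by simpa [smul_eq_C_mul] using hpow.C_mul _)).eq_zero_of_forall_pderiv_eq_zero
    (by omega) fun i => ?_
  rw [map_sub, (pderiv i).map_smul, hc, pderiv_pow_succ_of_pderiv_eq_C (ha i), smul_smul,
    ← sub_smul]
  have hn : (n + 2 : K) ≠ 0 := by exact_mod_cast Nat.succ_ne_zero (n + 1)
  convert zero_smul K (L ^ (n + 1))
  field_simp
  push_cast
  linear_combination (n + 2 : K) * hcross i

theorem IsHomogeneous.eq_zero_of_forall_iterPDeriv_eq_zero {p : MvPolynomial σ K} {n k : ℕ}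
    (hp : p.IsHomogeneous n) (hk : k ≤ n)
    (h : ∀ l : List σ, l.length = k → iterPDeriv l p = 0) : p = 0 := by
  induction k generalizing p n with
  | zero => exact h [] rfl
  | succ k ih =>
    refine hp.eq_zero_of_forall_pderiv_eq_zero (by omega) fun i => ?_
    refine ih hp.pderiv (by omega) fun l hl => ?_
    rw [← iterPDeriv_append_singleton]
    exact h _ (by simp [hl])

theorem IsHomogeneous.exists_eq_smul_sq_of_pderiv_eq_smul {h q : MvPolynomial σ K}
    (hq : q.IsHomogeneous 2) {c : σ → K} (hc : ∀ i, pderiv i h = c i • q) {i₀ : σ}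
    (hi₀ : pderiv i₀ h ≠ 0) :
    ∃ (m : MvPolynomial σ K) (t : K), m.IsHomogeneous 1 ∧ m ≠ 0 ∧ q = t • m ^ 2 := by
  obtain ⟨hc₀, hq0⟩ := smul_ne_zero_iff.mp (hc i₀ ▸ hi₀)
  have hqm : ∀ j, pderiv j q = (c j / c i₀) • pderiv i₀ q := fun j => by
    rw [div_eq_inv_mul, mul_smul, ← smul_pderiv_comm_of_pderiv_eq_smul hc i₀ j,
      inv_smul_smul₀ hc₀]
  have hm0 : pderiv i₀ q ≠ 0 := fun h0 =>
    hq0 (hq.eq_zero_of_forall_pderiv_eq_zero two_ne_zero fun j => by rw [hqm, h0, smul_zero])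
  obtain ⟨t, ht⟩ := hq.exists_eq_smul_pow_of_pderiv_eq_smul_pow (n := 0) hq.pderiv hm0
    (by simpa using hqm)
  exact ⟨pderiv i₀ q, t, hq.pderiv, hm0, ht⟩

theorem IsHomogeneous.exists_eq_smul_pow_of_iterPDeriv_eq_smul_sq {L p : MvPolynomial σ K}
    {n : ℕ} (hp : p.IsHomogeneous (n + 2)) (hL : L.IsHomogeneous 1) (hL0 : L ≠ 0)
    (h : ∀ l : List σ, l.length = n → ∃ c : K, iterPDeriv l p = c • L ^ 2) :
    ∃ t : K, p = t • L ^ (n + 2) := by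
  induction n generalizing p with
  | zero => exact h [] rfl
  | succ n ih =>
    have hder : ∀ i, ∃ c : K, pderiv i p = c • L ^ (n + 2) := fun i =>
      ih hp.pderiv fun l hl => by
        simpa [iterPDeriv_append_singleton] using h (l ++ [i]) (by simp [hl])
    choose c hc using hder
    exact hp.exists_eq_smul_pow_of_pderiv_eq_smul_pow hL hL0 hc

end Field

end MvPolynomial

open MvPolynomial

theorem dirDeriv_single_one {g : ℕ} (i : Fin g) (p : MvPolynomial (Fin g) ℂ) :
    dirDeriv (Pi.single i 1) p = pderiv i p := by
  simp [dirDeriv, Pi.single_apply]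

theorem foldr_dirDeriv_map_single_one {g : ℕ} (l : List (Fin g)) (p : MvPolynomial (Fin g) ℂ) :
    (l.map fun i => Pi.single i 1).foldr dirDeriv p = iterPDeriv l p := by
  induction l with
  | nil => rfl
  | cons i l ih => simp [ih, dirDeriv_single_one]

theorem polar_quadrics_coincide_general (s d : ℕ) (hd : 3 ≤ d)
    (f : MvPolynomial (Fin (s + 1)) ℂ) (hf : f ≠ 0) (hhom : f.IsHomogeneous d)
    (q : MvPolynomial (Fin (s + 1)) ℂ) (hq2 : q.IsHomogeneous 2)
    (hpolar : ∀ bs : List (Fin (s + 1) → ℂ), bs.length = d - 2 →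
      ∃ c : ℂ, bs.foldr dirDeriv f = c • q) :
    ∃ (L : MvPolynomial (Fin (s + 1)) ℂ) (c : ℂ),
      L ≠ 0 ∧ L.IsHomogeneous 1 ∧ c ≠ 0 ∧ f = c • L ^ d ∧
      ∀ bs : List (Fin (s + 1) → ℂ), bs.length = d - 2 → bs.foldr dirDeriv f ≠ 0 →
        ∃ e : ℂ, e ≠ 0 ∧ bs.foldr dirDeriv f = e • L ^ 2 := by
  have hcoord (l : List (Fin (s + 1))) (hl : l.length = d - 2) :
      ∃ c : ℂ, iterPDeriv l f = c • q := by
    simpa [foldr_dirDeriv_map_single_one] using hpolar (l.map fun i => Pi.single i 1) (by simpa)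
  obtain ⟨_ | ⟨i₀, l⟩, hl, hne⟩ :
      ∃ l : List (Fin (s + 1)), l.length = d - 2 ∧ iterPDeriv l f ≠ 0 := by
    by_contra! h
    exact hf (hhom.eq_zero_of_forall_iterPDeriv_eq_zero (by omega) h)
  · simp at hl
    omega
  choose c hc using fun i => hcoord (i :: l) (by simp at hl ⊢; omega)
  obtain ⟨m, t, hm, hm0, rfl⟩ := hq2.exists_eq_smul_sq_of_pderiv_eq_smul hc hne
  obtain ⟨k, rfl⟩ : ∃ k, d = k + 2 := ⟨d - 2, by omega⟩
  obtain ⟨a, rfl⟩ := hhom.exists_eq_smul_pow_of_iterPDeriv_eq_smul_sq hm hm0 fun l hl => by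
    obtain ⟨e, he⟩ := hcoord l (by simpa using hl)
    exact ⟨e * t, by rw [he, smul_smul]⟩
  refine ⟨m, a, hm0, hm, fun ha => hf (by rw [ha, zero_smul]), rfl, fun bs hbs hbs0 => ?_⟩
  obtain ⟨e, he⟩ := hpolar bs hbs
  rw [he, smul_smul] at hbs0 ⊢
  exact ⟨e * t, (smul_ne_zero_iff.mp hbs0).1, rfl⟩

/-- Let `s ≥ 1`, `d ≥ 3`, and `f` a nonzero homogeneous polynomial of
degree `d` in `z₀, …, z_s` over `ℂ`.  If all polar quadrics of `f` coincide, i.e. there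
is a nonzero quadratic form `q` such that every iterated directional derivative
`∂_{b₁}⋯∂_{b_{d−2}} f` is a scalar multiple of `q`, then `f = c·ℓ^d` for a nonzero
linear form `ℓ` and `c ≠ 0`, and every nonzero polar quadric of `f` is a nonzero scalar
multiple of `ℓ²`. -/
theorem polar_quadrics_coincide (s d : ℕ) (hs : 1 ≤ s) (hd : 3 ≤ d)
    (f : MvPolynomial (Fin (s + 1)) ℂ) (hf : f ≠ 0) (hhom : f.IsHomogeneous d)
    (q : MvPolynomial (Fin (s + 1)) ℂ) (hq : q ≠ 0) (hq2 : q.IsHomogeneous 2)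
    (hpolar : ∀ bs : List (Fin (s + 1) → ℂ), bs.length = d - 2 →
      ∃ c : ℂ, bs.foldr dirDeriv f = c • q) :
    ∃ (L : MvPolynomial (Fin (s + 1)) ℂ) (c : ℂ),
      L ≠ 0 ∧ L.IsHomogeneous 1 ∧ c ≠ 0 ∧ f = c • L ^ d ∧
      ∀ bs : List (Fin (s + 1) → ℂ), bs.length = d - 2 → bs.foldr dirDeriv f ≠ 0 →
        ∃ e : ℂ, e ≠ 0 ∧ bs.foldr dirDeriv f = e • L ^ 2 :=
  polar_quadrics_coincide_general s d hd f hf hhom q hq2 hpolar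
end

section
/- Let g ≥ 1 and N ≥ 1. Let Δ⁽⁰⁾ be the identity operator on the polynomial ring ℂ[z₁,…,z_g], and for 1 ≤ k ≤ N let Δ⁽ᵏ⁾ be a constant-coefficient differential operator of order ≤ k on ℂ[z₁,…,z_g]. Then the following are equivalent: (a) for all polynomials f, g and all 0 ≤ k ≤ N, Δ⁽ᵏ⁾(fg) = Σ_{r=0}^{k} Δ⁽ʳ⁾(f)·Δ⁽ᵏ⁻ʳ⁾(g); (b) there exist vectors η₁, …, η_N ∈ ℂ^g such that, writing D_i = Σ_ℓ η_{iℓ} ∂/∂z_ℓ, for every 1 ≤ k ≤ N one has Δ⁽ᵏ⁾ = Σ (1/(h₁!⋯h_k!)) D₁^{h₁}⋯D_k^{h_k}, the sum being over all k-tuples of nonnegative integers (h₁,…,h_k) with h₁ + 2h₂ + ⋯ + k·h_k = k. (Equivalently, condition (a) says that for any point x ∈ ℂ^g the map f ↦ Σ_{j=0}^{N} (Δ⁽ʲ⁾f)(x)·tʲ is a ℂ-algebra homomorphism ℂ[z₁,…,z_g] → ℂ[t]/(t^{N+1}), defining a curvi-linear subscheme of length N+1 supported at x.) -/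
/-- The partial derivative `∂/∂zᵢ` as a `ℂ`-linear endomorphism of `ℂ[z₁,…,z_g]`. -/
noncomputable def pderivEnd {g : ℕ} (i : Fin g) :
    Module.End ℂ (MvPolynomial (Fin g) ℂ) :=
  (MvPolynomial.pderiv i).toLinearMap

/-- The constant-coefficient monomial differential operator `∂^m = ∏ᵢ (∂/∂zᵢ)^{mᵢ}`. -/
noncomputable def monomialOp {g : ℕ} (m : Fin g →₀ ℕ) :
    Module.End ℂ (MvPolynomial (Fin g) ℂ) :=
  (List.ofFn fun i : Fin g => (pderivEnd i) ^ (m i)).prod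

/-- The translation-invariant vector field `D = Σ_ℓ η_ℓ ∂/∂z_ℓ`. -/
noncomputable def vecField {g : ℕ} (η : Fin g → ℂ) :
    Module.End ℂ (MvPolynomial (Fin g) ℂ) :=
  ∑ i, η i • pderivEnd i

/-- Given vector fields `D₁, …, D_k`, the operator
`Δ⁽ᵏ⁾ = Σ_{h₁+2h₂+⋯+k·h_k = k} (1/(h₁!⋯h_k!)) D₁^{h₁}⋯D_k^{h_k}`.  (Any solution `h`
of `Σ (i+1)·hᵢ = k` satisfies `hᵢ ≤ k`, so the sum is over functions `Fin k → Fin (k+1)`.) -/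
noncomputable def deltaFormula {g : ℕ} (k : ℕ)
    (D : Fin k → Module.End ℂ (MvPolynomial (Fin g) ℂ)) :
    Module.End ℂ (MvPolynomial (Fin g) ℂ) :=
  ∑ h ∈ Finset.univ.filter
      (fun h : Fin k → Fin (k + 1) => ∑ i : Fin k, ((i : ℕ) + 1) * ((h i : ℕ)) = k),
    (((∏ i : Fin k, Nat.factorial ((h i : ℕ))) : ℕ) : ℂ)⁻¹ •
      (List.ofFn fun i : Fin k => (D i) ^ ((h i : ℕ))).prod

/-
Put `Φ = ∑ₖ Δ⁽ᵏ⁾ Xᵏ`, a power series with coefficients in `End ℂ[z₁,…,z_g]`. The Leibniz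
identities of order `≤ N` say that `f ↦ ∑ₖ Δ⁽ᵏ⁾(f) Xᵏ` is multiplicative modulo `X^{N+1}`.
This property is stable under products of such series, and `exp (D Xᵐ)` has it whenever `D` is
a derivation; since the operator in (b) is the `Xᵏ`-coefficient of
`exp (D₁ X) exp (D₂ X²) ⋯ exp (D_k Xᵏ)`, this gives (b) ⇒ (a).
Conversely, suppose `Δ⁽ʲ⁾` is the `Xʲ`-coefficient of `exp (D₁ X) ⋯ exp (Dₙ Xⁿ)` for `j ≤ n`.
Comparing the Leibniz identities of order `n + 1` for both series shows that the difference of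
their `X^{n+1}`-coefficients is a derivation. It commutes with every `∂/∂z_ℓ`, as all constant
coefficient operators do, so it is a constant vector field `D_{n+1}`, and the induction goes on.
-/

open Finset Finset.HasAntidiagonal PowerSeries

theorem sum_antidiagonal_antidiagonal_interchange {M : Type*} [AddCommMonoid M] (k : ℕ)
    (F : ℕ → ℕ → ℕ → ℕ → M) :
    ∑ p ∈ antidiagonal k, ∑ q ∈ antidiagonal p.1, ∑ r ∈ antidiagonal p.2, F q.1 q.2 r.1 r.2 =
      ∑ p ∈ antidiagonal k, ∑ q ∈ antidiagonal p.1, ∑ r ∈ antidiagonal p.2,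
        F q.1 r.1 q.2 r.2 := by
  simp only [Finset.sum_sigma']
  apply Finset.sum_nbij' (fun ⟨⟨i, j⟩, ⟨⟨a, b⟩, ⟨c, d⟩⟩⟩ ↦ ⟨(a + c, b + d), ⟨(a, c), (b, d)⟩⟩)
    (fun ⟨⟨i, j⟩, ⟨⟨a, b⟩, ⟨c, d⟩⟩⟩ ↦ ⟨(a + c, b + d), ⟨(a, c), (b, d)⟩⟩) <;>
    aesop (add simp [add_assoc, add_comm, add_left_comm])

theorem sum_antidiagonal_ite_dvd {M : Type*} [AddCommMonoid M] {m : ℕ} (hm : 0 < m) (k : ℕ)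
    (G : ℕ → ℕ → M) :
    ∑ p ∈ antidiagonal k, (if m ∣ p.1 ∧ m ∣ p.2 then G (p.1 / m) (p.2 / m) else 0) =
      if m ∣ k then ∑ q ∈ antidiagonal (k / m), G q.1 q.2 else 0 := by
  rw [← Finset.sum_filter]
  split_ifs with hk
  · obtain ⟨n, rfl⟩ := hk
    rw [Nat.mul_div_cancel_left n hm]
    apply Finset.sum_nbij' (fun p ↦ (p.1 / m, p.2 / m)) (fun q ↦ (m * q.1, m * q.2))
    · rintro ⟨i, j⟩ hp
      simp only [mem_filter, HasAntidiagonal.mem_antidiagonal] at hp ⊢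
      obtain ⟨hij, ⟨a, rfl⟩, ⟨b, rfl⟩⟩ := hp
      rw [← mul_add] at hij
      simp [Nat.mul_div_cancel_left _ hm, Nat.eq_of_mul_eq_mul_left hm hij]
    · rintro ⟨a, b⟩ hq
      simp only [mem_filter, HasAntidiagonal.mem_antidiagonal] at hq ⊢
      exact ⟨by rw [← mul_add, hq], dvd_mul_right m a, dvd_mul_right m b⟩
    · rintro ⟨i, j⟩ hp
      simp only [mem_filter] at hp
      simp [Nat.mul_div_cancel' hp.2.1, Nat.mul_div_cancel' hp.2.2]
    · rintro ⟨a, b⟩ -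
      simp [Nat.mul_div_cancel_left _ hm]
    · rintro ⟨i, j⟩ -
      rfl
  · refine Finset.sum_eq_zero fun p hp ↦ ?_
    simp only [mem_filter, HasAntidiagonal.mem_antidiagonal] at hp
    exact absurd (hp.1 ▸ dvd_add hp.2.1 hp.2.2) hk

section Leibniz

variable {R A : Type*} [Semiring R] [Ring A] [Module R A]

def IsLeibnizAt (Φ : PowerSeries (Module.End R A)) (k : ℕ) : Prop :=
  ∀ f g : A, coeff k Φ (f * g) = ∑ p ∈ antidiagonal k, coeff p.1 Φ f * coeff p.2 Φ g

theorem isLeibnizAt_mk_iff (Δ : ℕ → Module.End R A) (k : ℕ) :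
    IsLeibnizAt (mk Δ) k ↔
      ∀ f g : A, Δ k (f * g) = ∑ r ∈ range (k + 1), Δ r f * Δ (k - r) g := by
  simp only [IsLeibnizAt, coeff_mk, Finset.Nat.sum_antidiagonal_eq_sum_range_succ_mk]

theorem IsLeibnizAt.congr {Φ Ψ : PowerSeries (Module.End R A)} {k : ℕ} (hΦ : IsLeibnizAt Φ k)
    (h : ∀ i ≤ k, coeff i Φ = coeff i Ψ) : IsLeibnizAt Ψ k := by
  intro f g
  rw [← h k le_rfl, hΦ]
  refine Finset.sum_congr rfl fun p hp ↦ ?_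
  rw [h p.1 (antidiagonal.fst_le hp), h p.2 (antidiagonal.snd_le hp)]

theorem isLeibnizAt_one (k : ℕ) : IsLeibnizAt (1 : PowerSeries (Module.End R A)) k := by
  intro f g
  rcases k.eq_zero_or_pos with rfl | hk
  · simp
  · rw [coeff_one, if_neg hk.ne', LinearMap.zero_apply]
    refine (Finset.sum_eq_zero fun p hp ↦ ?_).symm
    have := HasAntidiagonal.mem_antidiagonal.mp hp
    simp only [coeff_one]
    split_ifs <;> simp_all

theorem IsLeibnizAt.mul {Φ Ψ : PowerSeries (Module.End R A)} {n : ℕ}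
    (hΦ : ∀ k ≤ n, IsLeibnizAt Φ k) (hΨ : ∀ k ≤ n, IsLeibnizAt Ψ k) :
    IsLeibnizAt (Φ * Ψ) n := by
  intro f g
  have hΦΨ : ∀ p ∈ antidiagonal n, coeff p.1 Φ (coeff p.2 Ψ (f * g)) =
      ∑ q ∈ antidiagonal p.1, ∑ r ∈ antidiagonal p.2,
        coeff q.1 Φ (coeff r.1 Ψ f) * coeff q.2 Φ (coeff r.2 Ψ g) := fun p hp ↦ by
    rw [hΨ p.2 (antidiagonal.snd_le hp), map_sum, Finset.sum_comm]
    exact Finset.sum_congr rfl fun r _ ↦ hΦ p.1 (antidiagonal.fst_le hp) _ _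
  simp only [coeff_mul, LinearMap.sum_apply, Module.End.mul_apply,
    Finset.sum_mul, Finset.mul_sum]
  rw [Finset.sum_congr rfl hΦΨ]
  exact (sum_antidiagonal_antidiagonal_interchange n fun c a d b ↦
    coeff c Φ (coeff a Ψ f) * coeff d Φ (coeff b Ψ g)).symm.trans
      (Finset.sum_congr rfl fun p _ ↦ Finset.sum_comm)

theorem isLeibnizAt_list_prod {l : List (PowerSeries (Module.End R A))}
    (h : ∀ Φ ∈ l, ∀ k, IsLeibnizAt Φ k) (k : ℕ) :
    IsLeibnizAt l.prod k :=
  List.prod_induction (fun Φ ↦ ∀ k, IsLeibnizAt Φ k)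
    (fun _ _ hΦ hΨ _ ↦ IsLeibnizAt.mul (fun i _ ↦ hΦ i) (fun i _ ↦ hΨ i)) isLeibnizAt_one h k

theorem IsLeibnizAt.sub_coeff_apply_mul {Φ Ψ : PowerSeries (Module.End R A)} {k : ℕ}
    (hk : 0 < k) (hΦ : IsLeibnizAt Φ k) (hΨ : IsLeibnizAt Ψ k) (h0 : coeff 0 Φ = 1)
    (hlt : ∀ i < k, coeff i Φ = coeff i Ψ) (f g : A) :
    (coeff k Φ - coeff k Ψ) (f * g) =
      f * (coeff k Φ - coeff k Ψ) g + (coeff k Φ - coeff k Ψ) f * g := by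
  have h0' : coeff 0 Ψ = 1 := (hlt 0 hk).symm.trans h0
  rw [LinearMap.sub_apply, hΦ, hΨ, ← sum_sub_distrib,
    sum_eq_add_of_mem (0, k) (k, 0) (by simp) (by simp) (by simp [hk.ne'])]
  · simp only [h0, h0', Module.End.one_apply, LinearMap.sub_apply, mul_sub, sub_mul]
  · rintro ⟨i, j⟩ hp hne
    obtain rfl := HasAntidiagonal.mem_antidiagonal.mp hp
    rw [hlt i (by grind), hlt j (by grind), sub_self]

end Leibniz

theorem IsLeibnizAt.exists_derivation_eq_sub {R A : Type*} [CommSemiring R] [CommRing A]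
    [Algebra R A] {Φ Ψ : PowerSeries (Module.End R A)} {k : ℕ} (hk : 0 < k)
    (hΦ : IsLeibnizAt Φ k) (hΨ : IsLeibnizAt Ψ k) (h0 : coeff 0 Φ = 1)
    (hlt : ∀ i < k, coeff i Φ = coeff i Ψ) :
    ∃ T : Derivation R A A, (T : Module.End R A) = coeff k Φ - coeff k Ψ :=
  ⟨Derivation.mk' (coeff k Φ - coeff k Ψ) fun f g ↦ by
    rw [hΦ.sub_coeff_apply_mul hk hΨ h0 hlt, smul_eq_mul, smul_eq_mul, mul_comm _ g], rfl⟩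

section ExpSeries

variable (K : Type*) {S : Type*} [Field K] [Ring S] [Algebra K S]

/-- `exp (D Xᵐ)`. -/
noncomputable def expSeries (D : S) (m : ℕ) : PowerSeries S :=
  mk fun k ↦ if m ∣ k then ((k / m).factorial : K)⁻¹ • D ^ (k / m) else 0

/-- `exp (D₀ X) exp (D₁ X²) ⋯ exp (D_{M-1} Xᴹ)`, in this order. -/
noncomputable def expProd {M : ℕ} (D : Fin M → S) : PowerSeries S :=
  (List.ofFn fun i ↦ expSeries K (D i) (i + 1)).prod

variable {K}

theorem expProd_succ {M : ℕ} (D : Fin (M + 1) → S) :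
    expProd K D = expProd K (fun i ↦ D i.castSucc) * expSeries K (D (Fin.last M)) (M + 1) := by
  simp only [expProd, List.ofFn_succ', List.prod_concat, Fin.val_last, Fin.val_castSucc]

theorem coeff_zero_expProd {M : ℕ} (D : Fin M → S) : coeff 0 (expProd K D) = 1 := by
  rw [coeff_zero_eq_constantCoeff_apply, expProd, map_list_prod, List.map_ofFn]
  exact List.prod_eq_one fun a ha ↦ by
    obtain ⟨i, rfl⟩ := List.mem_ofFn.mp ha
    simp [expSeries]

theorem coeff_mul_expSeries (Ψ : PowerSeries S) (D : S) {m : ℕ} (hm : 0 < m) (k : ℕ) :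
    coeff k (Ψ * expSeries K D m) =
      ∑ j ∈ range (k / m + 1), coeff (k - m * j) Ψ * (((j.factorial : K)⁻¹) • D ^ j) := by
  simp only [coeff_mul, expSeries, coeff_mk, mul_ite, mul_zero]
  rw [← Finset.sum_filter]
  apply Finset.sum_nbij' (fun p ↦ p.2 / m) (fun j ↦ (k - m * j, m * j))
  · rintro ⟨i, j⟩ hp
    simp only [mem_filter, HasAntidiagonal.mem_antidiagonal] at hp
    simp only [mem_range, Nat.lt_succ_iff]
    exact Nat.div_le_div_right (by omega)
  · intro j hj
    simp only [mem_range, Nat.lt_succ_iff] at hj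
    have := (Nat.le_div_iff_mul_le hm).mp hj
    simp only [mem_filter, HasAntidiagonal.mem_antidiagonal]
    exact ⟨by rw [mul_comm] at this; omega, dvd_mul_right m j⟩
  · rintro ⟨i, j⟩ hp
    simp only [mem_filter, HasAntidiagonal.mem_antidiagonal] at hp
    simp only [Nat.mul_div_cancel' hp.2, Prod.mk.injEq, and_true]
    omega
  · intro j _
    simp [Nat.mul_div_cancel_left _ hm]
  · rintro ⟨i, j⟩ hp
    simp only [mem_filter, HasAntidiagonal.mem_antidiagonal] at hp
    obtain ⟨hij, c, rfl⟩ := hp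
    simp only [Nat.mul_div_cancel_left c hm]
    rw [show k - m * c = i by omega]

theorem coeff_mul_expSeries_of_lt (Ψ : PowerSeries S) (D : S) {m k : ℕ} (hkm : k < m) :
    coeff k (Ψ * expSeries K D m) = coeff k Ψ := by
  simp [coeff_mul_expSeries Ψ D (k.zero_le.trans_lt hkm), Nat.div_eq_of_lt hkm]

theorem coeff_mul_expSeries_self (Ψ : PowerSeries S) (D : S) {m : ℕ} (hm : 0 < m) :
    coeff m (Ψ * expSeries K D m) = coeff m Ψ + coeff 0 Ψ * D := by
  simp [coeff_mul_expSeries Ψ D hm, Nat.div_self hm, sum_range_succ]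

theorem coeff_expProd_castLE {M : ℕ} (D : Fin M → S) {k : ℕ} (hk : k ≤ M) :
    coeff k (expProd K fun i : Fin k ↦ D (Fin.castLE hk i)) = coeff k (expProd K D) := by
  induction M with
  | zero =>
    obtain rfl : k = 0 := by omega
    rfl
  | succ M ih =>
    rcases hk.eq_or_lt with rfl | hlt
    · simp only [Fin.castLE_refl]
    · rw [expProd_succ, coeff_mul_expSeries_of_lt _ _ hlt, ← ih _ (by omega)]
      rfl

theorem coeff_expProd {M : ℕ} (D : Fin M → S) {B k : ℕ} (hk : k ≤ B) :
    coeff k (expProd K D) =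
      ∑ h ∈ univ.filter (fun h : Fin M → Fin (B + 1) ↦ ∑ i : Fin M, ((i : ℕ) + 1) * (h i : ℕ) = k),
        (((∏ i : Fin M, Nat.factorial (h i : ℕ)) : ℕ) : K)⁻¹ •
          (List.ofFn fun i : Fin M ↦ D i ^ (h i : ℕ)).prod := by
  induction M generalizing k with
  | zero =>
    rcases k.eq_zero_or_pos with rfl | hk0
    · simp [expProd]
    · simp [expProd, coeff_one, hk0.ne', hk0.ne]
  | succ M ih =>
    have hw (h' : Fin M → Fin (B + 1)) (j : Fin (B + 1)) :
        ∑ i : Fin (M + 1), ((i : ℕ) + 1) * (Fin.snoc (α := fun _ ↦ Fin (B + 1)) h' j i : ℕ) =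
          ∑ i : Fin M, ((i : ℕ) + 1) * (h' i : ℕ) + (M + 1) * j := by
      simp [Fin.sum_univ_castSucc]
    rw [expProd_succ, coeff_mul_expSeries _ _ (Nat.add_one_pos M), sum_filter,
      ← (Fin.snocEquiv fun _ ↦ Fin (B + 1)).sum_comp, Fintype.sum_prod_type]
    simp only [Fin.snocEquiv_apply, hw, Fin.prod_univ_castSucc,
      List.ofFn_succ', List.prod_concat, Fin.snoc_castSucc, Fin.snoc_last]
    rw [Fin.sum_univ_eq_sum_range (fun j ↦ ∑ h' : Fin M → Fin (B + 1),
      if ∑ i : Fin M, ((i : ℕ) + 1) * (h' i : ℕ) + (M + 1) * j = k then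
        (((∏ i : Fin M, Nat.factorial (h' i : ℕ)) * j.factorial : ℕ) : K)⁻¹ •
          ((List.ofFn fun i : Fin M ↦ D i.castSucc ^ (h' i : ℕ)).prod * D (Fin.last M) ^ j)
      else 0)]
    rw [← sum_subset (range_subset_range.mpr (Nat.succ_le_succ ((k.div_le_self _).trans hk)))]
    · refine sum_congr rfl fun j hj ↦ ?_
      have hjk : (M + 1) * j ≤ k := by
        rw [mul_comm]
        exact (Nat.le_div_iff_mul_le (Nat.add_one_pos M)).mp (Nat.lt_succ_iff.mp (mem_range.mp hj))
      rw [ih _ (by omega), sum_filter, sum_mul]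
      refine sum_congr rfl fun h' _ ↦ ?_
      split_ifs with h₁ h₂ h₂
      · rw [smul_mul_smul_comm, Nat.cast_mul, mul_inv]
      · omega
      · omega
      · rw [zero_mul]
    · intro j _ hj
      have hjk : k < (M + 1) * j := by
        rw [mul_comm]
        exact (Nat.div_lt_iff_lt_mul (Nat.add_one_pos M)).mp (by simpa using hj)
      exact sum_eq_zero fun h' _ ↦ if_neg (by omega)

theorem commute_C_expSeries {a D : S} (h : Commute a D) (m : ℕ) :
    Commute (C a) (expSeries K D m) := by
  ext k
  simp only [coeff_C_mul, coeff_mul_C, expSeries, coeff_mk]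
  split_ifs
  · exact ((h.pow_right _).smul_right _).eq
  · simp

theorem commute_coeff_expProd {a : S} {M : ℕ} {D : Fin M → S} (h : ∀ i, Commute a (D i))
    (k : ℕ) : Commute a (coeff k (expProd K D)) := by
  have hC : Commute (C a) (expProd K D) := Commute.list_prod_right _ _ fun Φ hΦ ↦ by
    obtain ⟨i, rfl⟩ := List.mem_ofFn.mp hΦ
    exact commute_C_expSeries (h i) _
  have := congrArg (coeff k) hC.eq
  rwa [coeff_C_mul, coeff_mul_C] at this

end ExpSeries

theorem Derivation.pow_apply_mul {R A : Type*} [CommSemiring R] [CommSemiring A] [Algebra R A]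
    (D : Derivation R A A) (n : ℕ) (f g : A) :
    ((D : Module.End R A) ^ n) (f * g) =
      ∑ p ∈ antidiagonal n, n.choose p.1 • (((D : Module.End R A) ^ p.1) f *
        ((D : Module.End R A) ^ p.2) g) := by
  induction n with
  | zero => simp
  | succ n ih =>
    rw [sum_antidiagonal_choose_succ_nsmul
      (fun i j ↦ ((D : Module.End R A) ^ i) f * ((D : Module.End R A) ^ j) g), pow_succ',
      Module.End.mul_apply, ih, map_sum]
    simp only [pow_succ', Module.End.mul_apply, map_nsmul, Derivation.coeFn_coe,
      Derivation.leibniz, smul_eq_mul, smul_add, sum_add_distrib]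
    congr 1
    refine Finset.sum_congr rfl fun p hp ↦ ?_
    rw [n.choose_symm_of_eq_add (HasAntidiagonal.mem_antidiagonal.mp hp).symm, mul_comm]

section ExpOfDerivation

variable {K A : Type*} [Field K] [CharZero K] [CommRing A] [Algebra K A]

theorem Derivation.inv_factorial_smul_pow_apply_mul (D : Derivation K A A) (n : ℕ) (f g : A) :
    (((n.factorial : K)⁻¹ • (D : Module.End K A) ^ n)) (f * g) =
      ∑ p ∈ antidiagonal n, (((p.1.factorial : K)⁻¹ • (D : Module.End K A) ^ p.1) f *
        (((p.2.factorial : K)⁻¹ • (D : Module.End K A) ^ p.2) g)) := by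
  rw [LinearMap.smul_apply, D.pow_apply_mul, Finset.smul_sum]
  refine Finset.sum_congr rfl fun p hp ↦ ?_
  obtain rfl := HasAntidiagonal.mem_antidiagonal.mp hp
  rw [LinearMap.smul_apply, LinearMap.smul_apply, smul_mul_smul_comm, ← Nat.cast_smul_eq_nsmul K,
    smul_smul]
  congr 1
  have h := Nat.add_choose_mul_factorial_mul_factorial p.1 p.2
  rw [← Nat.choose_symm_add] at h
  have hc : ((p.1 + p.2).choose p.1 : K) ≠ 0 :=
    Nat.cast_ne_zero.mpr (Nat.choose_pos (Nat.le_add_right _ _)).ne'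
  rw [← h]
  push_cast
  field_simp

theorem isLeibnizAt_expSeries (D : Derivation K A A) {m : ℕ} (hm : 0 < m) (k : ℕ) :
    IsLeibnizAt (expSeries K (D : Module.End K A) m) k := by
  intro f g
  simp only [expSeries, coeff_mk, apply_ite (DFunLike.coe : Module.End K A → A → A), ite_apply,
    LinearMap.zero_apply, ite_zero_mul_ite_zero]
  rw [sum_antidiagonal_ite_dvd hm k fun a b ↦
    (((a.factorial : K)⁻¹ • (D : Module.End K A) ^ a) f *
      (((b.factorial : K)⁻¹ • (D : Module.End K A) ^ b) g))]
  split_ifs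
  · exact D.inv_factorial_smul_pow_apply_mul _ f g
  · rfl

end ExpOfDerivation

theorem deltaFormula_eq_coeff_expProd {g M : ℕ} (D : Fin M → Module.End ℂ (MvPolynomial (Fin g) ℂ))
    {k : ℕ} (hk : k ≤ M) :
    deltaFormula k (fun i ↦ D (Fin.castLE hk i)) = coeff k (expProd ℂ D) := by
  rw [← coeff_expProd_castLE D hk, coeff_expProd _ le_rfl]
  rfl

namespace MvPolynomial

theorem commute_pderiv {σ R : Type*} [CommRing R] (i j : σ) :
    Commute (pderiv (R := R) i : Module.End R (MvPolynomial σ R)) (pderiv (R := R) j) := by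
  rw [commute_iff_lie_eq, ← Derivation.commutator_coe_linear_map]
  suffices ⁅pderiv i, pderiv j⁆ = (0 : Derivation R (MvPolynomial σ R) (MvPolynomial σ R)) by
    rw [this]; rfl
  refine derivation_ext fun k ↦ ?_
  classical
  simp only [Derivation.commutator_apply, pderiv_X, Pi.single_apply]
  split_ifs <;> simp

theorem eq_C_constantCoeff_of_pderiv_eq_zero {σ R : Type*} [CommSemiring R] [NoZeroDivisors R]
    [CharZero R] {p : MvPolynomial σ R} (h : ∀ i, pderiv i p = 0) : p = C (constantCoeff p) := by
  classical
  ext m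
  rcases eq_or_ne m 0 with rfl | hm
  · simp [← constantCoeff_eq]
  · obtain ⟨i, hi⟩ : ∃ i, m i ≠ 0 := by
      by_contra! h0
      exact hm (Finsupp.ext h0)
    have hcoeff := coeff_pderiv (i := i) p (m - Finsupp.single i 1)
    rw [h i, coeff_zero, tsub_add_cancel_of_le (Finsupp.single_le_iff.mpr (by omega))] at hcoeff
    rw [coeff_C, if_neg (Ne.symm hm)]
    exact (mul_eq_zero.mp hcoeff.symm).resolve_right (Nat.cast_add_one_ne_zero _)

end MvPolynomial

open MvPolynomial

section VectorFields

variable {g : ℕ}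

noncomputable def vecFieldDerivation (η : Fin g → ℂ) :
    Derivation ℂ (MvPolynomial (Fin g) ℂ) (MvPolynomial (Fin g) ℂ) :=
  Derivation.mk' (vecField η) fun f₁ f₂ ↦ by
    simp only [vecField, pderivEnd, LinearMap.sum_apply, LinearMap.smul_apply,
      Derivation.coeFn_coe, Derivation.leibniz, smul_add, sum_add_distrib, smul_comm _ f₁,
      smul_comm _ f₂, ← Finset.smul_sum]

theorem commute_pderivEnd_monomialOp (j : Fin g) (m : Fin g →₀ ℕ) :
    Commute (pderivEnd j) (monomialOp m) :=
  Commute.list_prod_right _ _ fun T hT ↦ by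
    obtain ⟨i, rfl⟩ := List.mem_ofFn.mp hT
    exact (commute_pderiv j i).pow_right _

theorem commute_pderivEnd_vecField (j : Fin g) (η : Fin g → ℂ) :
    Commute (pderivEnd j) (vecField η) :=
  Commute.sum_right _ _ _ fun i _ ↦ (commute_pderiv j i).smul_right _

theorem Derivation.coe_eq_vecField_of_commute
    (T : Derivation ℂ (MvPolynomial (Fin g) ℂ) (MvPolynomial (Fin g) ℂ))
    (hT : ∀ j, Commute (pderivEnd j) (T : Module.End ℂ (MvPolynomial (Fin g) ℂ))) :
    (T : Module.End ℂ (MvPolynomial (Fin g) ℂ)) = vecField fun i ↦ constantCoeff (T (X i)) := by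
  have hX (i : Fin g) : T (X i) = MvPolynomial.C (constantCoeff (T (X i))) := by
    refine eq_C_constantCoeff_of_pderiv_eq_zero fun j ↦ ?_
    have hcomm := LinearMap.congr_fun (hT j).eq (X i)
    simp only [Module.End.mul_apply, Derivation.coeFn_coe, pderivEnd] at hcomm
    classical
    rw [hcomm, pderiv_X, Pi.single_apply]
    split_ifs <;> simp
  show _ = (vecFieldDerivation fun i ↦ constantCoeff (T (X i))).toLinearMap
  congr 1
  refine derivation_ext fun i ↦ ?_
  classical
  rw [hX i]
  simp [vecFieldDerivation, vecField, pderivEnd, pderiv_X, Pi.single_apply,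
    MvPolynomial.smul_eq_C_mul]

theorem isLeibnizAt_expProd_vecField {M : ℕ} (η : Fin M → Fin g → ℂ) (k : ℕ) :
    IsLeibnizAt (expProd ℂ fun i ↦ vecField (η i)) k :=
  isLeibnizAt_list_prod (fun Φ hΦ ↦ by
    obtain ⟨i, rfl⟩ := List.mem_ofFn.mp hΦ
    exact isLeibnizAt_expSeries (vecFieldDerivation (η i)) i.succ_pos) k

theorem exists_eq_coeff_expProd {N : ℕ} (Δ : ℕ → Module.End ℂ (MvPolynomial (Fin g) ℂ))
    (hΔ0 : Δ 0 = 1) (hL : ∀ k ≤ N, IsLeibnizAt (mk Δ) k)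
    (hcomm : ∀ k, 1 ≤ k → k ≤ N → ∀ j, Commute (pderivEnd j) (Δ k)) :
    ∀ n ≤ N, ∃ η : Fin n → Fin g → ℂ,
      ∀ k ≤ n, Δ k = coeff k (expProd ℂ fun i ↦ vecField (η i)) := by
  intro n
  induction n with
  | zero =>
    refine fun _ ↦ ⟨Fin.elim0, fun k hk ↦ ?_⟩
    obtain rfl : k = 0 := by omega
    rw [hΔ0, coeff_zero_expProd]
  | succ n ih =>
    intro hn
    obtain ⟨η, hη⟩ := ih (by omega)
    obtain ⟨T, hT⟩ := (hL (n + 1) hn).exists_derivation_eq_sub n.succ_pos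
      (isLeibnizAt_expProd_vecField η _) (by rw [coeff_mk, hΔ0])
      (fun i hi ↦ by rw [coeff_mk, hη i (by omega)])
    rw [coeff_mk] at hT
    have hTv := T.coe_eq_vecField_of_commute fun j ↦ by
      rw [hT]
      exact (hcomm (n + 1) (by omega) hn j).sub_right
        (commute_coeff_expProd (fun i ↦ commute_pderivEnd_vecField j _) _)
    refine ⟨Fin.snoc η fun i ↦ constantCoeff (T (X i)), fun k hk ↦ ?_⟩
    rw [expProd_succ]
    simp only [Fin.snoc_castSucc, Fin.snoc_last]
    rcases hk.lt_or_eq with hk | rfl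
    · rw [coeff_mul_expSeries_of_lt _ _ hk, hη k (by omega)]
    · rw [coeff_mul_expSeries_self _ _ n.succ_pos, coeff_zero_expProd, one_mul, ← hTv, hT,
        add_sub_cancel]

end VectorFields

theorem curvilinear_operator_formula_general (g N : ℕ)
    (Δ : ℕ → Module.End ℂ (MvPolynomial (Fin g) ℂ))
    (hΔ0 : Δ 0 = 1)
    (horder : ∀ k, 1 ≤ k → k ≤ N →
      ∃ (s : Finset (Fin g →₀ ℕ)) (c : (Fin g →₀ ℕ) → ℂ),
        (∀ m ∈ s, (m.sum fun _ e => e) ≤ k) ∧ Δ k = ∑ m ∈ s, c m • monomialOp m) :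
    ((∀ f₁ f₂ : MvPolynomial (Fin g) ℂ, ∀ k ≤ N,
        Δ k (f₁ * f₂) = ∑ r ∈ Finset.range (k + 1), Δ r f₁ * Δ (k - r) f₂)
      ↔
     (∃ η : Fin N → (Fin g → ℂ), ∀ (k : ℕ) (_ : 1 ≤ k) (hkN : k ≤ N),
        Δ k = deltaFormula k (fun i => vecField (η (Fin.castLE hkN i))))) := by
  have hcomm (k : ℕ) (hk : 1 ≤ k) (hkN : k ≤ N) (j : Fin g) : Commute (pderivEnd j) (Δ k) := by
    obtain ⟨s, c, -, hΔk⟩ := horder k hk hkN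
    rw [hΔk]
    exact Commute.sum_right _ _ _ fun m _ ↦ (commute_pderivEnd_monomialOp j m).smul_right _
  constructor
  · intro hL
    obtain ⟨η, hη⟩ := exists_eq_coeff_expProd Δ hΔ0
      (fun k hk ↦ (isLeibnizAt_mk_iff Δ k).mpr fun f₁ f₂ ↦ hL f₁ f₂ k hk) hcomm N le_rfl
    exact ⟨η, fun k _ hkN ↦ (hη k hkN).trans (deltaFormula_eq_coeff_expProd _ hkN).symm⟩
  · rintro ⟨η, hη⟩ f₁ f₂ k hk
    refine (isLeibnizAt_mk_iff Δ k).mp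
      ((isLeibnizAt_expProd_vecField η k).congr fun i hi ↦ ?_) f₁ f₂
    rw [coeff_mk]
    rcases i.eq_zero_or_pos with rfl | hi0
    · rw [coeff_zero_expProd, hΔ0]
    · exact ((hη i hi0 (hi.trans hk)).trans
        (deltaFormula_eq_coeff_expProd (fun i ↦ vecField (η i)) _)).symm

/-- Let `g, N ≥ 1`, let `Δ⁽⁰⁾` be the identity operator on
`ℂ[z₁,…,z_g]` and for `1 ≤ k ≤ N` let `Δ⁽ᵏ⁾` be a constant-coefficient differential
operator of order `≤ k`.  Then `Δ` satisfies the Leibniz-type identities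
`Δ⁽ᵏ⁾(fg) = Σ_{r=0}^{k} Δ⁽ʳ⁾(f)·Δ⁽ᵏ⁻ʳ⁾(g)` for all `k ≤ N` (equivalently,
`f ↦ Σ (Δ⁽ʲ⁾f)(x) tʲ` is a `ℂ`-algebra homomorphism into `ℂ[t]/(t^{N+1})`) if and only
if there are vectors `η₁, …, η_N ∈ ℂ^g` such that, with `D_i = Σ_ℓ η_{iℓ} ∂/∂z_ℓ`,
`Δ⁽ᵏ⁾ = Σ_{h₁+2h₂+⋯+k·h_k=k} (1/(h₁!⋯h_k!)) D₁^{h₁}⋯D_k^{h_k}` for `1 ≤ k ≤ N`. -/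
theorem curvilinear_operator_formula (g N : ℕ) (hg : 1 ≤ g) (hN : 1 ≤ N)
    (Δ : ℕ → Module.End ℂ (MvPolynomial (Fin g) ℂ))
    (hΔ0 : Δ 0 = 1)
    (horder : ∀ k, 1 ≤ k → k ≤ N →
      ∃ (s : Finset (Fin g →₀ ℕ)) (c : (Fin g →₀ ℕ) → ℂ),
        (∀ m ∈ s, (m.sum fun _ e => e) ≤ k) ∧ Δ k = ∑ m ∈ s, c m • monomialOp m) :
    ((∀ f₁ f₂ : MvPolynomial (Fin g) ℂ, ∀ k ≤ N,
        Δ k (f₁ * f₂) = ∑ r ∈ Finset.range (k + 1), Δ r f₁ * Δ (k - r) f₂)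
      ↔
     (∃ η : Fin N → (Fin g → ℂ), ∀ (k : ℕ) (_ : 1 ≤ k) (hkN : k ≤ N),
        Δ k = deltaFormula k (fun i => vecField (η (Fin.castLE hkN i))))) :=
  curvilinear_operator_formula_general g N Δ hΔ0 horder
end

section
/- Let g ≥ 1, N ≥ 1, θ ∈ ℂ[z₁,…,z_g] a polynomial, x ∈ ℂ^g a point, and η₁, …, η_N ∈ ℂ^g vectors, with D_i = Σ_ℓ η_{iℓ} ∂/∂z_ℓ and Δ⁽ᵏ⁾ = Σ_{h₁+2h₂+⋯+k·h_k = k} (1/(h₁!⋯h_k!)) D₁^{h₁}⋯D_k^{h_k} for 1 ≤ k ≤ N (and Δ⁽⁰⁾ = id). Let δ : ℂ[z₁,…,z_g] → ℂ[t]/(t^{N+1}) be the ℂ-algebra homomorphism f ↦ Σ_{k=0}^{N} (Δ⁽ᵏ⁾f)(x)·tᵏ. Then δ annihilates the ideal of ℂ[z₁,…,z_g] generated by θ, ∂θ/∂z₁, …, ∂θ/∂z_g (i.e. the curvi-linear subscheme of length N+1 supported at x determined by (D₁,…,D_N) is contained in the singular scheme of the hypersurface θ = 0) if and only if θ(x)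 = 0 and (Δ⁽ᵏ⁾(∂θ/∂z_j))(x) = 0 for all 0 ≤ k ≤ N and all 1 ≤ j ≤ g. -/
/-! Write `δ(f) = Σ_k (Δ⁽ᵏ⁾f)(x) tᵏ`. The operators `Δ⁽ᵏ⁾` are the coefficients of
`exp (Σ_i tⁱ⁺¹ D_i)`, so `δ(f)` is the Taylor expansion of `f` along the curve
`c(t) = x + Σ_i η_i tⁱ⁺¹`, that is `δ(f) ≡ f(c(t)) mod t^{N+1}`. Hence `δ` annihilates
exactly the ideal `{f | t^{N+1} ∣ f(c(t))}`, and it contains `(θ, ∂θ/∂z₁, …, ∂θ/∂z_g)` iff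
it contains the generators. For the `∂θ/∂z_j` this is the right-hand condition; granted
that, the condition for `θ` reduces to `θ(x) = 0`, because by the chain rule
`d/dt θ(c(t)) = Σ_j c_j'(t) (∂θ/∂z_j)(c(t))` is then already divisible by `t^N`. -/

open Finset
open scoped Nat

@[to_additive]
lemma Fin.prod_univ_eq_prod_castLE {M : Type*} [CommMonoid M] {n N : ℕ} (hn : n ≤ N)
    (f : Fin N → M) (hf : ∀ j : Fin N, n ≤ j → f j = 1) :
    ∏ j, f j = ∏ j : Fin n, f (Fin.castLE hn j) := by
  refine (prod_of_injOn (Fin.castLE hn) (Fin.castLE_injective hn).injOn (by simp)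
    (fun j _ hj => hf j ?_) fun _ _ => rfl).symm
  by_contra! hjn
  exact hj ⟨⟨j, hjn⟩, by simp, rfl⟩

lemma MvPolynomial.pderiv_pderiv_comm_s11 {R σ : Type*} [CommSemiring R] (i j : σ)
    (f : MvPolynomial σ R) : pderiv i (pderiv j f) = pderiv j (pderiv i f) := by
  classical
  rcases eq_or_ne i j with rfl | hij
  · rfl
  ext m
  simp only [coeff_pderiv, add_right_comm m (Finsupp.single i 1), Finsupp.add_apply,
    Finsupp.single_apply, if_neg hij, if_neg hij.symm, add_zero]
  ring

open Polynomial in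
lemma MvPolynomial.derivative_aeval {R σ : Type*} [CommSemiring R] [Fintype σ] (c : σ → R[X])
    (f : MvPolynomial σ R) :
    derivative (aeval c f) = ∑ j, derivative (c j) * aeval c (pderiv j f) := by
  classical
  induction f using MvPolynomial.induction_on with
  | C a => simp
  | add p q hp hq => simp only [map_add, hp, hq, mul_add, sum_add_distrib]
  | mul_X p j hp =>
    simp only [map_mul, aeval_X, derivative_mul, hp, pderiv_mul, pderiv_X, map_add, mul_add,
      sum_add_distrib, sum_mul, mul_assoc]
    congr 1
    rw [sum_eq_single j (fun i _ hi => by simp [hi.symm]) (by simp)]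
    simp [mul_comm]

open Polynomial in
lemma Polynomial.X_pow_succ_dvd_iff_of_X_pow_dvd_derivative {R : Type*} [Semiring R]
    [IsAddTorsionFree R] {p : R[X]} {n : ℕ} (hp : X ^ n ∣ derivative p) :
    X ^ (n + 1) ∣ p ↔ p.coeff 0 = 0 := by
  rw [X_pow_dvd_iff] at hp ⊢
  refine ⟨fun h => h 0 n.succ_pos, fun h0 d hd => ?_⟩
  rcases d with _ | d
  · exact h0
  have := hp d (by omega)
  rw [coeff_derivative, ← Nat.cast_succ, ← nsmul_eq_mul'] at this
  exact (smul_eq_zero.1 this).resolve_left d.succ_ne_zero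

section WeightedTuples

variable {N : ℕ}

def tupleWeight (h : Fin N → ℕ) : ℕ := ∑ i : Fin N, ((i : ℕ) + 1) * h i

def weightedTuples (N m : ℕ) : Finset (Fin N → ℕ) :=
  {h ∈ Fintype.piFinset fun _ => range (m + 1) | tupleWeight h = m}

lemma mul_apply_le_tupleWeight (h : Fin N → ℕ) (i : Fin N) :
    ((i : ℕ) + 1) * h i ≤ tupleWeight h :=
  single_le_sum (f := fun i : Fin N => ((i : ℕ) + 1) * h i) (fun _ _ => Nat.zero_le _)
    (mem_univ i)

lemma apply_le_tupleWeight (h : Fin N → ℕ) (i : Fin N) : h i ≤ tupleWeight h :=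
  (Nat.le_mul_of_pos_left _ i.succ_pos).trans (mul_apply_le_tupleWeight h i)

lemma apply_eq_zero_of_tupleWeight_le {h : Fin N → ℕ} {i : Fin N} (hi : tupleWeight h ≤ i) :
    h i = 0 := by
  have := mul_apply_le_tupleWeight h i
  nlinarith

@[simp]
lemma mem_weightedTuples {m : ℕ} {h : Fin N → ℕ} :
    h ∈ weightedTuples N m ↔ tupleWeight h = m := by
  simp only [weightedTuples, mem_filter, Fintype.mem_piFinset, mem_range, and_iff_right_iff_imp]
  rintro rfl i
  exact Nat.lt_succ_of_le (apply_le_tupleWeight h i)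

lemma tupleWeight_add (h h' : Fin N → ℕ) :
    tupleWeight (h + h') = tupleWeight h + tupleWeight h' := by
  simp only [tupleWeight, Pi.add_apply, mul_add, sum_add_distrib]

lemma tupleWeight_single (i : Fin N) : tupleWeight (Pi.single i 1) = (i : ℕ) + 1 := by
  simp [tupleWeight, Pi.single_apply]

end WeightedTuples

section CurvilinearCoeff

variable (K : Type*) {A : Type*} [Field K] [CommSemiring A] [Algebra K A] {N : ℕ}

noncomputable def dividedMonomial (D : Fin N → A) (h : Fin N → ℕ) : A :=
  ∏ i, ((h i)! : K)⁻¹ • D i ^ h i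

/-- The coefficient of `tᵐ` in `exp (Σ_i D_i tⁱ⁺¹)`. -/
noncomputable def curvilinearCoeff (D : Fin N → A) (m : ℕ) : A :=
  ∑ h ∈ weightedTuples N m, dividedMonomial K D h

variable {K}

lemma curvilinearCoeff_zero (D : Fin N → A) : curvilinearCoeff K D 0 = 1 := by
  have : weightedTuples N 0 = {0} := by
    ext h
    simp [tupleWeight, funext_iff]
  simp [curvilinearCoeff, dividedMonomial, this]

lemma sum_apply_smul_dividedMonomial_of_le (D : Fin N → A) (i : Fin N) {m : ℕ} (hi : m ≤ i) :
    ∑ h ∈ weightedTuples N m, h i • dividedMonomial K D h = 0 := by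
  refine sum_eq_zero fun h hh => ?_
  rw [apply_eq_zero_of_tupleWeight_le ((mem_weightedTuples.1 hh).trans_le hi), zero_smul]

lemma curvilinearCoeff_castLE (D : Fin N → A) {n m : ℕ} (hn : n ≤ N) (hm : m ≤ n) :
    curvilinearCoeff K (fun i : Fin n => D (Fin.castLE hn i)) m = curvilinearCoeff K D m := by
  have hvanish : ∀ h ∈ weightedTuples N m, ∀ j : Fin N, n ≤ j → h j = 0 := fun h hh j hj =>
    apply_eq_zero_of_tupleWeight_le (by rw [mem_weightedTuples.1 hh]; exact hm.trans hj)
  refine sum_nbij' (fun h j => if hj : (j : ℕ) < n then h ⟨j, hj⟩ else 0)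
    (fun h j => h (Fin.castLE hn j)) (fun h hh => ?_) (fun h hh => ?_) (fun h _ => ?_)
    (fun h hh => ?_) (fun h _ => ?_)
  · rw [mem_weightedTuples] at hh ⊢
    rw [← hh, tupleWeight, Fin.sum_univ_eq_sum_castLE hn _ fun j hj => by simp [not_lt.2 hj]]
    simp [tupleWeight]
  · rw [mem_weightedTuples, ← mem_weightedTuples.1 hh, eq_comm, tupleWeight,
      Fin.sum_univ_eq_sum_castLE hn _ fun j hj => by simp [hvanish h hh j hj]]
    rfl
  · ext j; simp
  · ext j
    split_ifs with hj
    · rfl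
    · exact (hvanish h hh j (not_lt.1 hj)).symm
  · rw [dividedMonomial, dividedMonomial,
      Fin.prod_univ_eq_prod_castLE hn _ fun j hj => by simp [not_lt.2 hj]]
    simp

variable [CharZero K]

lemma succ_smul_inv_factorial_smul_pow_succ (a : A) (n : ℕ) :
    (n + 1) • (((n + 1)! : K)⁻¹ • a ^ (n + 1)) = a * ((n ! : K)⁻¹ • a ^ n) := by
  rw [← Nat.cast_smul_eq_nsmul K, smul_smul, mul_smul_comm, ← pow_succ', Nat.factorial_succ,
    Nat.cast_mul, mul_inv, ← mul_assoc, mul_inv_cancel₀ (Nat.cast_ne_zero.2 n.succ_ne_zero),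
    one_mul]

lemma succ_smul_dividedMonomial_add_single (D : Fin N → A) (h : Fin N → ℕ) (i : Fin N) :
    (h i + 1) • dividedMonomial K D (h + Pi.single i 1) = D i * dividedMonomial K D h := by
  classical
  rw [dividedMonomial, dividedMonomial, Fintype.prod_eq_mul_prod_compl i,
    Fintype.prod_eq_mul_prod_compl i (fun j => _ • _)]
  have hrest : ∀ j ∈ ({i}ᶜ : Finset (Fin N)), (h + Pi.single i 1 : Fin N → ℕ) j = h j :=
    fun j hj => by simp [show j ≠ i by simpa using hj]
  rw [prod_congr rfl fun j hj => by rw [hrest j hj], ← smul_mul_assoc, ← mul_assoc]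
  simp only [Pi.add_apply, Pi.single_eq_same, succ_smul_inv_factorial_smul_pow_succ]

lemma sum_apply_smul_dividedMonomial (D : Fin N → A) (i : Fin N) {m : ℕ} (hi : (i : ℕ) < m) :
    ∑ h ∈ weightedTuples N m, h i • dividedMonomial K D h
      = D i * curvilinearCoeff K D (m - (i + 1)) := by
  rw [curvilinearCoeff, mul_sum]
  symm
  refine sum_of_injOn (· + Pi.single i 1) (add_left_injective _).injOn (fun h hh => ?_)
    (fun h _ hh => ?_) (fun h _ => ?_)
  · simp only [mem_coe, mem_weightedTuples, tupleWeight_add, tupleWeight_single] at hh ⊢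
    omega
  · rcases Nat.eq_zero_or_pos (h i) with hi0 | hi0
    · rw [hi0, zero_smul]
    have hsingle : Pi.single i 1 ≤ h := fun j => by
      rcases eq_or_ne j i with rfl | hj
      · simpa using Nat.one_le_iff_ne_zero.2 hi0.ne'
      · simp [hj]
    refine absurd ⟨h - Pi.single i 1, ?_, tsub_add_cancel_of_le hsingle⟩ hh
    have := tupleWeight_add (h - Pi.single i 1) (Pi.single i 1)
    simp only [mem_coe, mem_weightedTuples] at *
    rw [tsub_add_cancel_of_le hsingle, tupleWeight_single] at this
    omega
  · rw [← succ_smul_dividedMonomial_add_single]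
    simp

/-- The coefficient identity behind `t (d/dt) exp S = t S' exp S` for `S = Σ_i D_i tⁱ⁺¹`. -/
theorem nsmul_curvilinearCoeff (D : Fin N → A) (m : ℕ) :
    m • curvilinearCoeff K D m = ∑ i : Fin N,
      if (i : ℕ) < m then ((i : ℕ) + 1) • (D i * curvilinearCoeff K D (m - (i + 1))) else 0 := by
  calc m • curvilinearCoeff K D m
      = ∑ h ∈ weightedTuples N m, tupleWeight h • dividedMonomial K D h := by
        rw [curvilinearCoeff, smul_sum]
        exact sum_congr rfl fun h hh => by rw [mem_weightedTuples.1 hh]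
    _ = ∑ i : Fin N, ((i : ℕ) + 1) • ∑ h ∈ weightedTuples N m, h i • dividedMonomial K D h := by
        simp only [tupleWeight, sum_smul, mul_smul, smul_sum]
        exact sum_comm
    _ = _ := sum_congr rfl fun i _ => by
        split_ifs with hi
        · rw [sum_apply_smul_dividedMonomial D i hi]
        · rw [sum_apply_smul_dividedMonomial_of_le D i (not_lt.1 hi), smul_zero]

end CurvilinearCoeff

open scoped IsMulCommutative

section ConstCoeffDiffOps

variable {g : ℕ}

/-- A commutative algebra containing every `D_i`: inside it they can be treated as commuting
variables. -/
noncomputable def constCoeffDiffOps (g : ℕ) :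
    Subalgebra ℂ (Module.End ℂ (MvPolynomial (Fin g) ℂ)) :=
  Algebra.adjoin ℂ (Set.range pderivEnd)

instance : IsMulCommutative (constCoeffDiffOps g) :=
  Algebra.isMulCommutative_adjoin ℂ <| by
    rintro _ ⟨i, rfl⟩ _ ⟨j, rfl⟩
    exact LinearMap.ext fun f => MvPolynomial.pderiv_pderiv_comm_s11 i j f

lemma pderivEnd_mem_constCoeffDiffOps (i : Fin g) : pderivEnd i ∈ constCoeffDiffOps g :=
  Algebra.subset_adjoin ⟨i, rfl⟩

lemma vecField_mem_constCoeffDiffOps (η : Fin g → ℂ) : vecField η ∈ constCoeffDiffOps g :=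
  Subalgebra.sum_mem _ fun i _ => Subalgebra.smul_mem _ (pderivEnd_mem_constCoeffDiffOps i) _

end ConstCoeffDiffOps

lemma deltaFormula_eq_curvilinearCoeff {g k : ℕ}
    (S : Subalgebra ℂ (Module.End ℂ (MvPolynomial (Fin g) ℂ))) [IsMulCommutative S]
    (D : Fin k → S) :
    deltaFormula k (fun i => D i)
      = ((curvilinearCoeff ℂ D k : S) : Module.End ℂ (MvPolynomial (Fin g) ℂ)) := by
  rw [deltaFormula, curvilinearCoeff, AddSubmonoidClass.coe_finsetSum]
  refine sum_of_injOn (fun h i => (h i : ℕ)) (fun h _ h' _ hh => ?_) (fun h hh => ?_)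
    (fun h hh hnot => ?_) (fun h _ => ?_)
  · exact funext fun i => Fin.ext (congrFun hh i)
  · simpa [tupleWeight] using hh
  · have hle : ∀ i, h i < k + 1 := fun i =>
      Nat.lt_succ_of_le ((mem_weightedTuples.1 hh) ▸ apply_le_tupleWeight h i)
    exact absurd ⟨fun i => ⟨h i, hle i⟩, by simpa [tupleWeight] using hh, rfl⟩ hnot
  · have hprod :
        (List.ofFn fun i => (D i : Module.End ℂ (MvPolynomial (Fin g) ℂ)) ^ (h i : ℕ)).prod
          = ((∏ i, D i ^ (h i : ℕ) : S) : Module.End ℂ (MvPolynomial (Fin g) ℂ)) := by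
      rw [← List.prod_ofFn, ← Subalgebra.coe_val, map_list_prod, List.map_ofFn]
      simp [Function.comp_def]
    rw [dividedMonomial, prod_smul, Subalgebra.coe_smul, hprod, prod_inv_distrib]
    push_cast
    rfl

section Curve

open Polynomial

variable {σ R : Type*} [CommRing R] {N : ℕ}

noncomputable def curve (x : σ → R) (η : Fin N → σ → R) (j : σ) : R[X] :=
  C (x j) + ∑ i : Fin N, C (η i j) * X ^ ((i : ℕ) + 1)

lemma coeff_zero_aeval_curve (x : σ → R) (η : Fin N → σ → R) (f : MvPolynomial σ R) :
    (MvPolynomial.aeval (curve x η) f).coeff 0 = MvPolynomial.eval x f := by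
  have hx : (fun j => aeval 0 (curve x η j)) = x :=
    funext fun j => by simp [curve, eval_finsetSum]
  rw [coeff_zero_eq_aeval_zero, ← AlgHom.comp_apply, MvPolynomial.comp_aeval, hx]
  rfl

lemma coeff_derivative_curve_mul (x : σ → R) (η : Fin N → σ → R) (j : σ) (p : R[X]) (m : ℕ) :
    (derivative (curve x η j) * p).coeff m
      = ∑ i : Fin N, if (i : ℕ) ≤ m then ((i : R) + 1) * η i j * p.coeff (m - i) else 0 := by
  simp only [curve, derivative_add, derivative_C, zero_add, derivative_sum, derivative_C_mul_X_pow,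
    sum_mul, finsetSum_coeff, Nat.add_sub_cancel, mul_assoc, coeff_C_mul, coeff_X_pow_mul']
  refine sum_congr rfl fun i _ => ?_
  split_ifs <;> push_cast <;> ring

end Curve

section Taylor

open MvPolynomial

variable {g N : ℕ}

noncomputable def constCoeffVecField (η : Fin g → ℂ) : constCoeffDiffOps g :=
  ⟨vecField η, vecField_mem_constCoeffDiffOps η⟩

lemma eval_constCoeffVecField_mul_apply (x : Fin g → ℂ) (η : Fin g → ℂ) (P : constCoeffDiffOps g)
    (f : MvPolynomial (Fin g) ℂ) :
    eval x (((constCoeffVecField η * P : constCoeffDiffOps g) : Module.End ℂ _) f)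
      = ∑ j, η j * eval x ((P : Module.End ℂ _) (pderiv j f)) := by
  rw [mul_comm]
  simp [constCoeffVecField, vecField, pderivEnd]

theorem eval_curvilinearCoeff_apply (x : Fin g → ℂ) (η : Fin N → Fin g → ℂ) (m : ℕ)
    (f : MvPolynomial (Fin g) ℂ) :
    eval x (((curvilinearCoeff ℂ (fun i => constCoeffVecField (η i)) m : constCoeffDiffOps g) :
        Module.End ℂ _) f)
      = (aeval (curve x η) f).coeff m := by
  induction m using Nat.strong_induction_on generalizing f with
  | _ m ih =>
  rcases m with _ | m
  · simp [curvilinearCoeff_zero, coeff_zero_aeval_curve]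
  apply mul_left_cancel₀ (Nat.cast_add_one_ne_zero m)
  calc ((m : ℂ) + 1) * eval x (((curvilinearCoeff ℂ (fun i => constCoeffVecField (η i)) (m + 1) :
          constCoeffDiffOps g) : Module.End ℂ _) f)
      = ∑ i : Fin N, ∑ j, if (i : ℕ) ≤ m then ((i : ℂ) + 1) * η i j *
          (aeval (curve x η) (pderiv j f)).coeff (m - i) else 0 := by
        rw [← Nat.cast_succ, ← nsmul_eq_mul, ← map_nsmul, ← LinearMap.smul_apply,
          ← AddSubmonoidClass.coe_nsmul, nsmul_curvilinearCoeff, AddSubmonoidClass.coe_finsetSum,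
          LinearMap.sum_apply, map_sum]
        refine sum_congr rfl fun i _ => ?_
        split_ifs with hi hi'
        · rw [AddSubmonoidClass.coe_nsmul, LinearMap.smul_apply, map_nsmul,
            eval_constCoeffVecField_mul_apply, nsmul_eq_mul, mul_sum]
          refine sum_congr rfl fun j _ => ?_
          rw [show m.succ - (i + 1) = m - i by omega, ih (m - i) (by omega)]
          push_cast; ring
        · omega
        · omega
        · simp
    _ = ∑ j, (Polynomial.derivative (curve x η j) * aeval (curve x η) (pderiv j f)).coeff m := by
        simp only [coeff_derivative_curve_mul]
        exact sum_comm
    _ = ((m : ℂ) + 1) * (aeval (curve x η) f).coeff (m + 1) := by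
        rw [← Polynomial.finsetSum_coeff, ← derivative_aeval, Polynomial.coeff_derivative,
          mul_comm]

end Taylor

theorem eval_deltaFormula_apply {g N k : ℕ} (x : Fin g → ℂ) (η : Fin N → Fin g → ℂ) (hk : k ≤ N)
    (f : MvPolynomial (Fin g) ℂ) :
    MvPolynomial.eval x (deltaFormula k (fun i => vecField (η (Fin.castLE hk i))) f)
      = (MvPolynomial.aeval (curve x η) f).coeff k := by
  have h := deltaFormula_eq_curvilinearCoeff _ fun i => constCoeffVecField (η (Fin.castLE hk i))
  rw [curvilinearCoeff_castLE (fun j => constCoeffVecField (η j)) hk le_rfl] at h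
  rw [show deltaFormula k (fun i => vecField (η (Fin.castLE hk i))) = _ from h,
    eval_curvilinearCoeff_apply]

section CurvilinearIdeal

open MvPolynomial

variable {σ R : Type*} [CommRing R] {N : ℕ}

noncomputable def curvilinearIdeal (N : ℕ) (x : σ → R) (η : Fin N → σ → R) :
    Ideal (MvPolynomial σ R) :=
  (Ideal.span {Polynomial.X ^ (N + 1)}).comap (aeval (curve x η))

lemma mem_curvilinearIdeal {x : σ → R} {η : Fin N → σ → R} {f : MvPolynomial σ R} :
    f ∈ curvilinearIdeal N x η ↔ ∀ k ≤ N, (aeval (curve x η) f).coeff k = 0 := by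
  simp only [curvilinearIdeal, Ideal.mem_comap, Ideal.mem_span_singleton,
    Polynomial.X_pow_dvd_iff, Nat.lt_succ_iff]

lemma mem_curvilinearIdeal_iff_eval_eq_zero [Fintype σ] [IsAddTorsionFree R] {x : σ → R}
    {η : Fin N → σ → R} {θ : MvPolynomial σ R} (h : ∀ j, pderiv j θ ∈ curvilinearIdeal N x η) :
    θ ∈ curvilinearIdeal N x η ↔ eval x θ = 0 := by
  simp only [curvilinearIdeal, Ideal.mem_comap, Ideal.mem_span_singleton] at h ⊢
  rw [Polynomial.X_pow_succ_dvd_iff_of_X_pow_dvd_derivative, coeff_zero_aeval_curve]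
  rw [derivative_aeval]
  exact dvd_sum fun j _ => dvd_mul_of_dvd_right ((pow_dvd_pow _ N.le_succ).trans (h j)) _

end CurvilinearIdeal

theorem curvilinear_in_singular_locus_iff_general (g N : ℕ)
    (θ : MvPolynomial (Fin g) ℂ) (x : Fin g → ℂ)
    (η : Fin N → (Fin g → ℂ))
    (Δ : ℕ → Module.End ℂ (MvPolynomial (Fin g) ℂ))
    (hΔ : ∀ (k : ℕ) (hk : k ≤ N),
      Δ k = deltaFormula k (fun i => vecField (η (Fin.castLE hk i)))) :
    ((∀ f ∈ Ideal.span
        ({θ} ∪ Set.range fun j : Fin g => (MvPolynomial.pderiv j θ : MvPolynomial (Fin g) ℂ)),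
        ∀ k ≤ N, MvPolynomial.eval x (Δ k f) = 0)
      ↔
     (MvPolynomial.eval x θ = 0 ∧
      ∀ k ≤ N, ∀ j : Fin g, MvPolynomial.eval x (Δ k (MvPolynomial.pderiv j θ)) = 0)) := by
  have hI : ∀ f, f ∈ curvilinearIdeal N x η ↔ ∀ k ≤ N, MvPolynomial.eval x (Δ k f) = 0 :=
    fun f => mem_curvilinearIdeal.trans <| forall₂_congr fun k hk => by
      rw [hΔ k hk, eval_deltaFormula_apply]
  have hspan : (∀ f ∈ Ideal.span ({θ} ∪ Set.range fun j => MvPolynomial.pderiv j θ),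
      f ∈ curvilinearIdeal N x η) ↔
      θ ∈ curvilinearIdeal N x η ∧ ∀ j, MvPolynomial.pderiv j θ ∈ curvilinearIdeal N x η := by
    rw [← SetLike.le_def, Ideal.span_le, Set.union_subset_iff, Set.singleton_subset_iff,
      Set.range_subset_iff]
    rfl
  have hpd : (∀ k ≤ N, ∀ j, MvPolynomial.eval x (Δ k (MvPolynomial.pderiv j θ)) = 0) ↔
      ∀ j, MvPolynomial.pderiv j θ ∈ curvilinearIdeal N x η := by
    simp only [hI]
    exact ⟨fun h j k hk => h k hk j, fun h k hk j => h j k hk⟩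
  simp only [← hI, hspan, hpd]
  exact and_congr_left mem_curvilinearIdeal_iff_eval_eq_zero

/-- Let `g, N ≥ 1`, `θ ∈ ℂ[z₁,…,z_g]`, `x ∈ ℂ^g`, and
`η₁, …, η_N ∈ ℂ^g`, with `D_i = Σ_ℓ η_{iℓ} ∂/∂z_ℓ` and `Δ⁽ᵏ⁾` given by the curvilinear
formula (so `f ↦ Σ_{k≤N} (Δ⁽ᵏ⁾f)(x) tᵏ` is a `ℂ`-algebra homomorphism into
`ℂ[t]/(t^{N+1})`).  Then this homomorphism annihilates the ideal
`(θ, ∂θ/∂z₁, …, ∂θ/∂z_g)` — i.e. the curvilinear scheme of length `N+1` at `x` lies in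
the singular scheme of `θ = 0` — if and only if `θ(x) = 0` and
`(Δ⁽ᵏ⁾(∂θ/∂z_j))(x) = 0` for all `0 ≤ k ≤ N` and `1 ≤ j ≤ g`. -/
theorem curvilinear_in_singular_locus_iff (g N : ℕ) (hg : 1 ≤ g) (hN : 1 ≤ N)
    (θ : MvPolynomial (Fin g) ℂ) (x : Fin g → ℂ)
    (η : Fin N → (Fin g → ℂ))
    (Δ : ℕ → Module.End ℂ (MvPolynomial (Fin g) ℂ))
    (hΔ : ∀ (k : ℕ) (hk : k ≤ N),
      Δ k = deltaFormula k (fun i => vecField (η (Fin.castLE hk i)))) :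
    ((∀ f ∈ Ideal.span
        ({θ} ∪ Set.range fun j : Fin g => (MvPolynomial.pderiv j θ : MvPolynomial (Fin g) ℂ)),
        ∀ k ≤ N, MvPolynomial.eval x (Δ k f) = 0)
      ↔
     (MvPolynomial.eval x θ = 0 ∧
      ∀ k ≤ N, ∀ j : Fin g, MvPolynomial.eval x (Δ k (MvPolynomial.pderiv j θ)) = 0)) :=
  curvilinear_in_singular_locus_iff_general g N θ x η Δ hΔ
end
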